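/- arXiv:math/0411333 — 5 statements merged into one kernel-verified Lean document; each statement's English description precedes it below -/
import Mathlib

section
/- Let (ℙ_n) and ℙ be probability measures on ℝ with Stieltjes transforms f_n and f respectively. If f_n(z) → f(z) as n → ∞ for every z ∈ ℂ⁺, then ℙ_n converges weakly (in distribution) to ℙ. -/
open MeasureTheory Complex Filter

section Kernel

variable {y : ℝ} (hy : 0 < y)

lemma k_denom_pos (t x : ℝ) (hy : 0 < y) : 0 < (x - t) ^ 2 + y ^ 2 := by positivity

lemma k_nonneg (t x : ℝ) (hy : 0 < y) : 0 ≤ y / ((x - t) ^ 2 + y ^ 2) := by positivity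

lemma k_le (t x : ℝ) (hy : 0 < y) : y / ((x - t) ^ 2 + y ^ 2) ≤ y⁻¹ := by
  rw [div_le_iff₀ (k_denom_pos t x hy)]
  rw [inv_mul_eq_div, le_div_iff₀ hy]
  nlinarith [sq_nonneg (x - t)]

lemma k_cont (t : ℝ) (hy : 0 < y) : Continuous fun x : ℝ => y / ((x - t) ^ 2 + y ^ 2) := by
  apply continuous_const.div (by continuity)
  intro x; exact (k_denom_pos t x hy).ne'

lemma k_cont_prod (hy : 0 < y) :
    Continuous fun p : ℝ × ℝ => y / ((p.1 - p.2) ^ 2 + y ^ 2) := by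
  apply continuous_const.div (by continuity)
  intro p; exact (k_denom_pos p.2 p.1 hy).ne'

lemma k_eq (t x : ℝ) (hy : 0 < y) :
    y / ((x - t) ^ 2 + y ^ 2) = y⁻¹ * (1 + ((x - t) / y) ^ 2)⁻¹ := by
  have h := k_denom_pos t x hy
  field_simp
  ring

lemma k_integrable (t : ℝ) (hy : 0 < y) :
    Integrable (fun x : ℝ => y / ((x - t) ^ 2 + y ^ 2)) := by
  have h1 : Integrable (fun x : ℝ => (1 + (x / y) ^ 2)⁻¹) :=
    integrable_inv_one_add_sq.comp_div hy.ne'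
  have h2 : Integrable (fun x : ℝ => (1 + ((x - t) / y) ^ 2)⁻¹) := h1.comp_sub_right t
  simpa [k_eq _ _ hy] using h2.const_mul y⁻¹

lemma k_integral (t : ℝ) (hy : 0 < y) :
    ∫ x : ℝ, y / ((x - t) ^ 2 + y ^ 2) = Real.pi := by
  simp only [k_eq _ _ hy]
  rw [MeasureTheory.integral_const_mul]
  have h1 : (fun x : ℝ => (1 + ((x - t) / y) ^ 2)⁻¹)
      = (fun x : ℝ => (1 + (x / y) ^ 2)⁻¹) ∘ (fun x => x - t) := rfl
  rw [h1]
  rw [show (integral volume ((fun x : ℝ => (1 + (x / y) ^ 2)⁻¹) ∘ fun x => x - t))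
      = ∫ x : ℝ, (1 + ((x - t) / y) ^ 2)⁻¹ from rfl]
  rw [integral_sub_right_eq_self (fun x : ℝ => (1 + (x / y) ^ 2)⁻¹) t]
  rw [MeasureTheory.Measure.integral_comp_div (fun x : ℝ => (1 + x ^ 2)⁻¹) y]
  rw [integral_univ_inv_one_add_sq]
  rw [abs_of_pos hy, smul_eq_mul]
  field_simp

end Kernel

section StF

/-- Poisson-type integral (imaginary part of Stieltjes transform). -/
noncomputable def stF (μ : Measure ℝ) (y x : ℝ) : ℝ :=
  ∫ t, y / ((x - t) ^ 2 + y ^ 2) ∂μ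

variable {μ : Measure ℝ} [IsProbabilityMeasure μ] {y : ℝ}

lemma stieltjes_integrable (μ : Measure ℝ) [IsProbabilityMeasure μ] {z : ℂ} (hz : 0 < z.im) :
    Integrable (fun t : ℝ => ((t : ℂ) - z)⁻¹) μ := by
  have hne : ∀ t : ℝ, ((t : ℂ) - z) ≠ 0 := by
    intro t h
    have : ((t : ℂ) - z).im = 0 := by rw [h]; simp
    simp [Complex.sub_im, Complex.ofReal_im] at this
    rw [this] at hz; simp at hz
  refine Integrable.mono' (integrable_const (z.im)⁻¹)
    ((Continuous.aestronglyMeasurable ?_)) (Filter.Eventually.of_forall fun t => ?_)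
  · exact (Continuous.sub Complex.continuous_ofReal continuous_const).inv₀ hne
  · rw [norm_inv]
    have h1 : z.im ≤ ‖(t : ℂ) - z‖ := by
      have := Complex.abs_im_le_norm ((t : ℂ) - z)
      rw [Complex.sub_im, Complex.ofReal_im, zero_sub, abs_neg] at this
      calc z.im ≤ |z.im| := le_abs_self _
        _ ≤ _ := this
    exact inv_anti₀ hz h1

lemma stieltjes_im (μ : Measure ℝ) [IsProbabilityMeasure μ] {z : ℂ} (hz : 0 < z.im) :
    (∫ t : ℝ, ((t : ℂ) - z)⁻¹ ∂μ).im = stF μ z.im z.re := by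
  have H := integral_im (μ := μ) (𝕜 := ℂ) (stieltjes_integrable μ hz)
  simp only [RCLike.im_to_complex] at H
  rw [← H]
  unfold stF
  congr 1
  ext t
  rw [Complex.inv_im]
  have h1 : ((t : ℂ) - z).im = -z.im := by simp
  have h2 : Complex.normSq ((t : ℂ) - z) = (z.re - t) ^ 2 + z.im ^ 2 := by
    rw [Complex.normSq_apply]
    simp [Complex.sub_re, Complex.sub_im]
    ring
  rw [h1, h2]
  rw [neg_neg]

end StF

section Fubini

variable {μ : Measure ℝ} [IsProbabilityMeasure μ] {y : ℝ} {g : ℝ → ℝ} {M : ℝ}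

lemma k_integrable_mu (μ : Measure ℝ) [IsProbabilityMeasure μ] (x : ℝ) (hy : 0 < y) :
    Integrable (fun t : ℝ => y / ((x - t) ^ 2 + y ^ 2)) μ := by
  refine Integrable.mono' (integrable_const y⁻¹)
    (Continuous.aestronglyMeasurable ?_) (Filter.Eventually.of_forall fun t => ?_)
  · apply continuous_const.div (by continuity)
    intro t; exact (k_denom_pos t x hy).ne'
  · rw [Real.norm_eq_abs, _root_.abs_of_nonneg (k_nonneg t x hy)]
    exact k_le t x hy

lemma stF_nonneg (hy : 0 < y) (x : ℝ) : 0 ≤ stF μ y x :=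
  integral_nonneg fun t => k_nonneg t x hy

lemma stF_le (hy : 0 < y) (x : ℝ) : stF μ y x ≤ y⁻¹ := by
  calc stF μ y x ≤ ∫ _ : ℝ, y⁻¹ ∂μ :=
        integral_mono (k_integrable_mu μ x hy) (integrable_const _)
          (fun t => k_le t x hy)
    _ = y⁻¹ := by simp

lemma stF_stronglyMeasurable (hy : 0 < y) :
    StronglyMeasurable (fun x => stF μ y x) := by
  apply StronglyMeasurable.integral_prod_right'
    (f := fun p : ℝ × ℝ => y / ((p.1 - p.2) ^ 2 + y ^ 2))
  exact (k_cont_prod hy).stronglyMeasurable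

lemma prod_integrable (hy : 0 < y) (hg : Continuous g) (hM : ∀ x, |g x| ≤ M) :
    Integrable (fun p : ℝ × ℝ => g p.2 * (y / ((p.2 - p.1) ^ 2 + y ^ 2)))
      (μ.prod volume) := by
  have hcont : Continuous (fun p : ℝ × ℝ => g p.2 * (y / ((p.2 - p.1) ^ 2 + y ^ 2))) := by
    refine (hg.comp continuous_snd).mul ?_
    exact (k_cont_prod hy).comp continuous_swap
  rw [integrable_prod_iff hcont.aestronglyMeasurable]
  constructor
  · refine Filter.Eventually.of_forall fun t => ?_
    exact (k_integrable t hy).bdd_mul hg.aestronglyMeasurable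
      (c := M) (Filter.Eventually.of_forall fun x => by rw [Real.norm_eq_abs]; exact hM x)
  · refine Integrable.mono' (integrable_const (M * Real.pi))
      (hcont.norm.stronglyMeasurable.integral_prod_right'.aestronglyMeasurable)
      (Filter.Eventually.of_forall fun t => ?_)
    have hK := k_integrable (y := y) t hy
    have hint : Integrable (fun x => g x * (y / ((x - t) ^ 2 + y ^ 2))) volume :=
      hK.bdd_mul hg.aestronglyMeasurable (c := M) (Filter.Eventually.of_forall fun x => by rw [Real.norm_eq_abs]; exact hM x)
    rw [Real.norm_eq_abs, _root_.abs_of_nonneg (integral_nonneg fun x => norm_nonneg _)]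
    calc ∫ x : ℝ, ‖g x * (y / ((x - t) ^ 2 + y ^ 2))‖
        ≤ ∫ x : ℝ, M * (y / ((x - t) ^ 2 + y ^ 2)) := by
          refine integral_mono hint.norm (hK.const_mul M) fun x => ?_
          rw [Real.norm_eq_abs, abs_mul, _root_.abs_of_nonneg (k_nonneg t x hy)]
          exact mul_le_mul_of_nonneg_right (hM x) (k_nonneg t x hy)
      _ = M * Real.pi := by rw [MeasureTheory.integral_const_mul, k_integral t hy]

lemma conv_integrable (hy : 0 < y) (hg : Continuous g) (hM : ∀ x, |g x| ≤ M) :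
    Integrable (fun t => ∫ x : ℝ, g x * (y / ((x - t) ^ 2 + y ^ 2))) μ :=
  (prod_integrable hy hg hM).integral_prod_left

lemma weighted_integrable (hy : 0 < y) (hg : Continuous g) (hM : ∀ x, |g x| ≤ M) :
    Integrable (fun x => g x * stF μ y x) volume := by
  have h2 := (prod_integrable (μ := μ) hy hg hM).integral_prod_right
  simpa only [MeasureTheory.integral_const_mul, stF] using h2

lemma fubini_swap (hy : 0 < y) (hg : Continuous g) (hM : ∀ x, |g x| ≤ M) :
    ∫ t, (∫ x : ℝ, g x * (y / ((x - t) ^ 2 + y ^ 2))) ∂μ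
      = ∫ x : ℝ, g x * stF μ y x := by
  have h := MeasureTheory.integral_integral_swap
    (f := fun t x => g x * (y / ((x - t) ^ 2 + y ^ 2)))
    (μ := μ) (ν := volume) (prod_integrable hy hg hM)
  rw [h]
  congr 1
  ext x
  rw [MeasureTheory.integral_const_mul]
  rfl

lemma stF_integrable (hy : 0 < y) : Integrable (fun x => stF μ y x) volume := by
  have := weighted_integrable (μ := μ) (g := fun _ => (1:ℝ)) (M := 1) hy
    continuous_const (fun x => by norm_num)
  simpa using this

lemma stF_integral (hy : 0 < y) : ∫ x : ℝ, stF μ y x = Real.pi := by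
  have h := fubini_swap (μ := μ) (g := fun _ => (1:ℝ)) (M := 1) hy
    continuous_const (fun x => by norm_num)
  simp only [one_mul] at h
  rw [← h]
  have : ∀ t : ℝ, (∫ x : ℝ, (y / ((x - t) ^ 2 + y ^ 2))) = Real.pi :=
    fun t => k_integral t hy
  rw [integral_congr_ae (Filter.Eventually.of_forall this)]
  simp

end Fubini

section Scheffe

lemma scheffe {ρn : ℕ → ℝ → ℝ} {ρ : ℝ → ℝ}
    (hi : ∀ n, Integrable (ρn n) volume) (hρ : Integrable ρ volume)
    (h0 : ∀ n x, 0 ≤ ρn n x)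
    (hpt : ∀ x, Filter.Tendsto (fun n => ρn n x) Filter.atTop (nhds (ρ x)))
    (hint : ∀ n, ∫ x, ρn n x = ∫ x, ρ x) :
    Filter.Tendsto (fun n => ∫ x, |ρn n x - ρ x|) Filter.atTop (nhds 0) := by
  have key : ∀ n, ∫ x, |ρn n x - ρ x| = 2 * ∫ x, max (ρ x - ρn n x) 0 := by
    intro n
    have h1 : ∀ x, |ρn n x - ρ x| = (ρn n x - ρ x) + 2 * max (ρ x - ρn n x) 0 := by
      intro x
      rcases le_total (ρ x) (ρn n x) with hc | hc
      · rw [_root_.abs_of_nonneg (by linarith : (0:ℝ) ≤ ρn n x - ρ x),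
          max_eq_right (by linarith)]; ring
      · rw [abs_of_nonpos (by linarith : ρn n x - ρ x ≤ 0),
          max_eq_left (by linarith)]; ring
    have hpp : Integrable (fun x => max (ρ x - ρn n x) 0) volume := (hρ.sub (hi n)).pos_part
    rw [integral_congr_ae (Filter.Eventually.of_forall h1)]
    have hadd : ∫ x, ((ρn n x - ρ x) + 2 * max (ρ x - ρn n x) 0)
        = (∫ x, (ρn n x - ρ x)) + ∫ x, 2 * max (ρ x - ρn n x) 0 :=
      integral_add ((hi n).sub hρ) (hpp.const_mul 2)
    rw [hadd, integral_sub (hi n) hρ, hint n, sub_self, zero_add,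
      MeasureTheory.integral_const_mul]
  have h2 : Filter.Tendsto (fun n => ∫ x, max (ρ x - ρn n x) 0) Filter.atTop (nhds 0) := by
    have h0' := MeasureTheory.tendsto_integral_of_dominated_convergence
      (F := fun n x => max (ρ x - ρn n x) 0) (f := fun _ => (0 : ℝ))
      (bound := fun x => |ρ x|)
      (fun n => (hρ.sub (hi n)).pos_part.aestronglyMeasurable)
      hρ.abs
      (fun n => Filter.Eventually.of_forall fun x => by
        simp only [Real.norm_eq_abs]
        rw [_root_.abs_of_nonneg (le_max_right _ _)]
        rcases le_total (ρ x) (ρn n x) with hc | hc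
        · rw [max_eq_right (by linarith)]; positivity
        · rw [max_eq_left (by linarith)]
          have := h0 n x
          calc ρ x - ρn n x ≤ ρ x := by linarith
            _ ≤ |ρ x| := le_abs_self _)
      (Filter.Eventually.of_forall fun x => by
        have := (tendsto_const_nhds (x := ρ x)).sub (hpt x)
        have h3 := this.max (tendsto_const_nhds (x := (0:ℝ)))
        simpa using h3)
    simpa using h0'
  rw [show (fun n => ∫ x, |ρn n x - ρ x|) = fun n => 2 * ∫ x, max (ρ x - ρn n x) 0
    from funext key]
  have := h2.const_mul 2
  simpa using this

lemma tendsto_weighted {ρn : ℕ → ℝ → ℝ} {ρ : ℝ → ℝ} {g : ℝ → ℝ} {M : ℝ}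
    (hi : ∀ n, Integrable (ρn n) volume) (hρ : Integrable ρ volume)
    (h0 : ∀ n x, 0 ≤ ρn n x)
    (hpt : ∀ x, Filter.Tendsto (fun n => ρn n x) Filter.atTop (nhds (ρ x)))
    (hint : ∀ n, ∫ x, ρn n x = ∫ x, ρ x)
    (hM : ∀ x, |g x| ≤ M)
    (hgi : ∀ n, Integrable (fun x => g x * ρn n x) volume)
    (hgρ : Integrable (fun x => g x * ρ x) volume) :
    Filter.Tendsto (fun n => ∫ x, g x * ρn n x) Filter.atTop (nhds (∫ x, g x * ρ x)) := by
  rw [← tendsto_sub_nhds_zero_iff]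
  refine squeeze_zero_norm (fun n => ?_)
    (by simpa using (scheffe hi hρ h0 hpt hint).const_mul M)
  ·
    rw [Real.norm_eq_abs, ← integral_sub (hgi n) hgρ]
    calc |∫ x, (g x * ρn n x - g x * ρ x)| ≤ ∫ x, |g x * ρn n x - g x * ρ x| :=
          by simpa [Real.norm_eq_abs] using
            norm_integral_le_integral_norm (fun x => g x * ρn n x - g x * ρ x)
      _ ≤ ∫ x, M * |ρn n x - ρ x| := by
          refine integral_mono ((hgi n).sub hgρ).abs
            (((hi n).sub hρ).abs.const_mul M) fun x => ?_
          rw [← mul_sub, abs_mul]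
          exact mul_le_mul_of_nonneg_right (hM x) (abs_nonneg _)
      _ = M * ∫ x, |ρn n x - ρ x| := MeasureTheory.integral_const_mul _ _

end Scheffe

section Approx

lemma conv_approx {y δ M ε' : ℝ} {g : ℝ → ℝ} (hy : 0 < y) (hδ : 0 < δ) (hyδ : y ≤ δ)
    (hg : Continuous g) (hM : ∀ x, |g x| ≤ M) (hε' : 0 ≤ ε') (t : ℝ)
    (hδg : ∀ x, |x - t| ≤ δ → |g x - g t| ≤ ε') :
    |(Real.pi)⁻¹ * (∫ x : ℝ, g x * (y / ((x - t) ^ 2 + y ^ 2))) - g t|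
      ≤ ε' + 4 * M * y / δ := by
  have hM0 : 0 ≤ M := le_trans (abs_nonneg _) (hM t)
  have hπ : (0:ℝ) < Real.pi := Real.pi_pos
  have hK := k_integrable (y := y) t hy
  have hKδ := k_integrable (y := δ) t hδ
  have hgK : Integrable (fun x => g x * (y / ((x - t) ^ 2 + y ^ 2))) volume :=
    hK.bdd_mul hg.aestronglyMeasurable (c := M) (Filter.Eventually.of_forall fun x => by rw [Real.norm_eq_abs]; exact hM x)
  have hgtK : Integrable (fun x => g t * (y / ((x - t) ^ 2 + y ^ 2))) volume :=
    hK.const_mul _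
  -- rewrite g t as the Poisson integral of the constant g t
  have hconst : g t = (Real.pi)⁻¹ * ∫ x : ℝ, g t * (y / ((x - t) ^ 2 + y ^ 2)) := by
    rw [MeasureTheory.integral_const_mul, k_integral t hy]
    field_simp
  rw [hconst, ← mul_sub, ← integral_sub hgK hgtK]
  have habs : |∫ x : ℝ, (g x * (y / ((x - t) ^ 2 + y ^ 2))
      - g t * (y / ((x - t) ^ 2 + y ^ 2)))|
      ≤ ∫ x : ℝ, |g x - g t| * (y / ((x - t) ^ 2 + y ^ 2)) := by
    have h1 := norm_integral_le_integral_norm (μ := volume)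
      (fun x : ℝ => g x * (y / ((x - t) ^ 2 + y ^ 2)) - g t * (y / ((x - t) ^ 2 + y ^ 2)))
    simp only [Real.norm_eq_abs] at h1
    refine le_trans h1 (le_of_eq (integral_congr_ae (Filter.Eventually.of_forall fun x => ?_)))
    show |g x * (y / ((x - t) ^ 2 + y ^ 2)) - g t * (y / ((x - t) ^ 2 + y ^ 2))|
        = |g x - g t| * (y / ((x - t) ^ 2 + y ^ 2))
    rw [← sub_mul, abs_mul, _root_.abs_of_nonneg (k_nonneg t x hy)]
  have hsub : Integrable (fun x => |g x - g t| * (y / ((x - t) ^ 2 + y ^ 2))) volume := by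
    refine hK.bdd_mul ((hg.sub continuous_const).abs.aestronglyMeasurable) (c := 2 * M) (Filter.Eventually.of_forall fun x => ?_)
    rw [Real.norm_eq_abs, _root_.abs_abs]
    calc |g x - g t| ≤ |g x| + |g t| := abs_sub _ _
      _ ≤ 2 * M := by have := hM x; have := hM t; linarith
  have hbound : ∀ x : ℝ, |g x - g t| * (y / ((x - t) ^ 2 + y ^ 2))
      ≤ ε' * (y / ((x - t) ^ 2 + y ^ 2)) + (4 * M * y / δ) * (δ / ((x - t) ^ 2 + δ ^ 2)) := by
    intro x
    rcases le_or_gt |x - t| δ with hc | hc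
    · have h1 := hδg x hc
      have h2 : (0:ℝ) ≤ (4 * M * y / δ) * (δ / ((x - t) ^ 2 + δ ^ 2)) := by positivity
      nlinarith [k_nonneg t x hy]
    · have h1 : |g x - g t| ≤ 2 * M := by
        calc |g x - g t| ≤ |g x| + |g t| := abs_sub _ _
          _ ≤ 2 * M := by have := hM x; have := hM t; linarith
      have hu : δ ^ 2 ≤ (x - t) ^ 2 := by
        have h4 := _root_.sq_abs (x - t); nlinarith [abs_nonneg (x - t)]
      have key : 2 * M * (y / ((x - t) ^ 2 + y ^ 2))
          ≤ (4 * M * y / δ) * (δ / ((x - t) ^ 2 + δ ^ 2)) := by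
        have hδne : δ ≠ 0 := hδ.ne'
        have h3 : (4 * M * y / δ) * (δ / ((x - t) ^ 2 + δ ^ 2))
            = (4 * M * y) / ((x - t) ^ 2 + δ ^ 2) := by
          field_simp
        have h5 : 2 * M * (y / ((x - t) ^ 2 + y ^ 2))
            = (2 * M * y) / ((x - t) ^ 2 + y ^ 2) := by ring
        rw [h3, h5, div_le_div_iff₀ (k_denom_pos t x hy) (k_denom_pos t x hδ)]
        nlinarith [mul_nonneg hM0 hy.le, sq_nonneg y, sq_nonneg δ]
      calc |g x - g t| * (y / ((x - t) ^ 2 + y ^ 2))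
          ≤ 2 * M * (y / ((x - t) ^ 2 + y ^ 2)) :=
            mul_le_mul_of_nonneg_right h1 (k_nonneg t x hy)
        _ ≤ (4 * M * y / δ) * (δ / ((x - t) ^ 2 + δ ^ 2)) := key
        _ ≤ ε' * (y / ((x - t) ^ 2 + y ^ 2)) + (4 * M * y / δ) * (δ / ((x - t) ^ 2 + δ ^ 2)) := by
            nlinarith [k_nonneg t x hy]
  have hintbound : ∫ x : ℝ, |g x - g t| * (y / ((x - t) ^ 2 + y ^ 2))
      ≤ ε' * Real.pi + (4 * M * y / δ) * Real.pi := by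
    have hrhs : Integrable (fun x : ℝ => ε' * (y / ((x - t) ^ 2 + y ^ 2))
        + (4 * M * y / δ) * (δ / ((x - t) ^ 2 + δ ^ 2))) volume :=
      (hK.const_mul ε').add (hKδ.const_mul _)
    calc ∫ x : ℝ, |g x - g t| * (y / ((x - t) ^ 2 + y ^ 2))
        ≤ ∫ x : ℝ, (ε' * (y / ((x - t) ^ 2 + y ^ 2))
            + (4 * M * y / δ) * (δ / ((x - t) ^ 2 + δ ^ 2))) :=
          integral_mono hsub hrhs hbound
      _ = ε' * Real.pi + (4 * M * y / δ) * Real.pi := by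
          rw [integral_add (hK.const_mul ε') (hKδ.const_mul _),
            MeasureTheory.integral_const_mul, MeasureTheory.integral_const_mul,
            k_integral t hy, k_integral t hδ]
  rw [abs_mul, _root_.abs_of_nonneg (inv_nonneg.mpr hπ.le)]
  calc (Real.pi)⁻¹ * |∫ x : ℝ, (g x * (y / ((x - t) ^ 2 + y ^ 2))
        - g t * (y / ((x - t) ^ 2 + y ^ 2)))|
      ≤ (Real.pi)⁻¹ * (ε' * Real.pi + (4 * M * y / δ) * Real.pi) := by
        refine mul_le_mul_of_nonneg_left (le_trans habs hintbound) (inv_nonneg.mpr hπ.le)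
    _ = ε' + 4 * M * y / δ := by field_simp
  done

end Approx

section Tail

variable {μ : Measure ℝ} [IsProbabilityMeasure μ]

lemma one_sub_stF (μ : Measure ℝ) [IsProbabilityMeasure μ] {R : ℝ} (hR : 0 < R) :
    1 - R * stF μ R 0 = ∫ t, t ^ 2 / (t ^ 2 + R ^ 2) ∂μ := by
  have hki := k_integrable_mu (y := R) μ 0 hR
  have h1 : R * stF μ R 0 = ∫ t, R * (R / ((0 - t) ^ 2 + R ^ 2)) ∂μ :=
    (MeasureTheory.integral_const_mul _ _).symm
  have h2 : (1:ℝ) = ∫ _, (1:ℝ) ∂μ := by simp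
  rw [h1]
  rw [show (1:ℝ) - ∫ t, R * (R / ((0 - t) ^ 2 + R ^ 2)) ∂μ
      = ∫ t, (1 - R * (R / ((0 - t) ^ 2 + R ^ 2))) ∂μ by
    rw [integral_sub (integrable_const 1) (hki.const_mul R)]; simp]
  refine integral_congr_ae (Filter.Eventually.of_forall fun t => ?_)
  have hden : (0:ℝ) < t ^ 2 + R ^ 2 := by positivity
  show 1 - R * (R / ((0 - t) ^ 2 + R ^ 2)) = t ^ 2 / (t ^ 2 + R ^ 2)
  have h3 : (0 - t) ^ 2 = t ^ 2 := by ring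
  rw [h3]
  field_simp
  ring

lemma tail_le (μ : Measure ℝ) [IsProbabilityMeasure μ] {R : ℝ} (hR : 0 < R) :
    (μ {t : ℝ | R < |t|}).toReal ≤ 2 * (1 - R * stF μ R 0) := by
  have hki := k_integrable_mu (y := R) μ 0 hR
  have hmeas : MeasurableSet {t : ℝ | R < |t|} :=
    (isOpen_lt continuous_const (_root_.continuous_abs)).measurableSet
  have hind : (μ {t : ℝ | R < |t|}).toReal
      = ∫ t, Set.indicator {t : ℝ | R < |t|} (fun _ => (1:ℝ)) t ∂μ := by
    rw [MeasureTheory.integral_indicator_const _ hmeas]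
    simp [Measure.real]
  rw [hind, one_sub_stF μ hR, ← MeasureTheory.integral_const_mul]
  have hrhsInt : Integrable (fun t : ℝ => 2 * (t ^ 2 / (t ^ 2 + R ^ 2))) μ := by
    have : Integrable (fun t : ℝ => 1 - R * (R / ((0 - t) ^ 2 + R ^ 2))) μ :=
      (integrable_const 1).sub (hki.const_mul R)
    refine (this.congr (Filter.Eventually.of_forall fun t => ?_)).const_mul 2
    have hden : (0:ℝ) < t ^ 2 + R ^ 2 := by positivity
    show 1 - R * (R / ((0 - t) ^ 2 + R ^ 2)) = t ^ 2 / (t ^ 2 + R ^ 2)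
    have h3 : (0 - t) ^ 2 = t ^ 2 := by ring
    rw [h3]; field_simp; ring
  refine integral_mono ((integrable_const (1:ℝ)).indicator hmeas) hrhsInt fun t => ?_
  have hden : (0:ℝ) < t ^ 2 + R ^ 2 := by positivity
  rcases le_or_gt |t| R with hc | hc
  · rw [Set.indicator_of_notMem (by simp [Set.mem_setOf_eq]; exact hc)]
    positivity
  · rw [Set.indicator_of_mem (by exact hc)]
    have ht2 : R ^ 2 < t ^ 2 := by
      have := _root_.sq_abs t
      nlinarith [abs_nonneg t]
    show (1:ℝ) ≤ 2 * (t ^ 2 / (t ^ 2 + R ^ 2))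
    rw [show (2:ℝ) * (t ^ 2 / (t ^ 2 + R ^ 2)) = (2 * t ^ 2) / (t ^ 2 + R ^ 2) by ring,
      le_div_iff₀ hden]
    nlinarith

end Tail

section Main

lemma tail_integral_tendsto (μ : Measure ℝ) [IsProbabilityMeasure μ] :
    Filter.Tendsto (fun m : ℕ => ∫ t, t ^ 2 / (t ^ 2 + ((m : ℝ) + 1) ^ 2) ∂μ)
      Filter.atTop (nhds 0) := by
  have hdc := MeasureTheory.tendsto_integral_of_dominated_convergence
    (F := fun (m : ℕ) (t : ℝ) => t ^ 2 / (t ^ 2 + ((m : ℝ) + 1) ^ 2))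
    (f := fun _ => (0 : ℝ)) (bound := fun _ => (1 : ℝ)) (μ := μ)
    (fun m => (Continuous.aestronglyMeasurable (by
      apply Continuous.div (by continuity) (by continuity)
      intro t
      positivity)))
    (integrable_const 1)
    (fun m => Filter.Eventually.of_forall fun t => by
      have hden : (0:ℝ) < t ^ 2 + ((m : ℝ) + 1) ^ 2 := by positivity
      rw [Real.norm_eq_abs, _root_.abs_of_nonneg (by positivity)]
      rw [div_le_one hden]
      nlinarith)
    (Filter.Eventually.of_forall fun t => by
      have hb : Filter.Tendsto (fun m : ℕ => t ^ 2 * (1 / ((m : ℝ) + 1)) ^ 2)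
          Filter.atTop (nhds 0) := by
        have h1 := tendsto_one_div_add_atTop_nhds_zero_nat (𝕜 := ℝ)
        have h2 := (h1.pow 2).const_mul (t ^ 2)
        simpa using h2
      refine squeeze_zero (fun m => by positivity) (fun m => ?_) hb
      have hden : (0:ℝ) < t ^ 2 + ((m : ℝ) + 1) ^ 2 := by positivity
      have hm1 : (0:ℝ) < ((m : ℝ) + 1) ^ 2 := by positivity
      rw [div_le_iff₀ hden]
      rw [one_div, ← Real.rpow_natCast _ 2]
      have : t ^ 2 * (((m : ℝ) + 1)⁻¹) ^ (2:ℕ) * (t ^ 2 + ((m : ℝ) + 1) ^ 2)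
          = t ^ 2 * ((t ^ 2 + ((m : ℝ) + 1) ^ 2) / ((m : ℝ) + 1) ^ 2) := by
        field_simp
      rw [Real.rpow_natCast]
      rw [this]
      have h3 : (1:ℝ) ≤ (t ^ 2 + ((m : ℝ) + 1) ^ 2) / ((m : ℝ) + 1) ^ 2 := by
        rw [le_div_iff₀ hm1]; nlinarith
      nlinarith [sq_nonneg t])
  simpa using hdc

end Main

set_option maxHeartbeats 1000000 in
/-- Pointwise convergence of Stieltjes transforms on the upper half plane implies weak
convergence of the corresponding probability measures on ℝ. -/
theorem stmt_2 (P : ℕ → ProbabilityMeasure ℝ) (Q : ProbabilityMeasure ℝ)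
    (h : ∀ z : ℂ, 0 < z.im →
      Tendsto (fun n => ∫ t : ℝ, ((t : ℂ) - z)⁻¹ ∂(P n : Measure ℝ)) atTop
        (nhds (∫ t : ℝ, ((t : ℂ) - z)⁻¹ ∂(Q : Measure ℝ)))) :
    Tendsto P atTop (nhds Q) := by
  rw [ProbabilityMeasure.tendsto_iff_forall_integral_tendsto]
  intro g
  set M : ℝ := ‖g‖ with hMdef
  have hgM : ∀ x : ℝ, |g x| ≤ M := fun x => by
    simpa [Real.norm_eq_abs] using g.norm_coe_le_norm x
  have hM0 : (0:ℝ) ≤ M := norm_nonneg g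
  -- pointwise convergence of the Poisson transforms
  have hstF : ∀ (x yy : ℝ), 0 < yy →
      Tendsto (fun n => stF (P n) yy x) atTop (nhds (stF Q yy x)) := by
    intro x yy hyy
    have hz : (0:ℝ) < ((x : ℂ) + yy * Complex.I).im := by simp [hyy]
    have h2 := (Complex.continuous_im.tendsto _).comp (h _ hz)
    have hre : ((x : ℂ) + yy * Complex.I).re = x := by simp
    have him : ((x : ℂ) + yy * Complex.I).im = yy := by simp
    have e1 : ∀ n, (∫ t : ℝ, ((t : ℂ) - ((x : ℂ) + yy * Complex.I))⁻¹ ∂(P n : Measure ℝ)).im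
        = stF (P n) yy x := fun n => by
      rw [stieltjes_im _ hz, him, hre]
    have e2 : (∫ t : ℝ, ((t : ℂ) - ((x : ℂ) + yy * Complex.I))⁻¹ ∂(Q : Measure ℝ)).im
        = stF Q yy x := by
      rw [stieltjes_im _ hz, him, hre]
    simpa only [Function.comp_def, e1, e2] using h2
  rw [Metric.tendsto_atTop]
  intro ε hε
  set ε2 : ℝ := ε / 16 with hε2def
  have hε2 : 0 < ε2 := by positivity
  set ε1 : ℝ := ε / (16 * (M + 1)) with hε1def
  have hε1 : 0 < ε1 := by positivity
  -- Step 1 : choose R controlling the tails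
  obtain ⟨m, hm⟩ :=
    ((tail_integral_tendsto (Q : Measure ℝ)).eventually_lt_const (by positivity :
      (0:ℝ) < ε1 / 4)).exists
  set R : ℝ := (m : ℝ) + 1 with hRdef
  have hR : (0:ℝ) < R := by positivity
  have hQJ : 1 - R * stF (Q : Measure ℝ) R 0 < ε1 / 4 := by
    rw [one_sub_stF _ hR]; exact hm
  have hQJ0 : (0:ℝ) ≤ 1 - R * stF (Q : Measure ℝ) R 0 := by
    rw [one_sub_stF _ hR]
    exact integral_nonneg fun t => by positivity
  have hQtail : ((Q : Measure ℝ) {t : ℝ | R < |t|}).toReal < ε1 := by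
    calc ((Q : Measure ℝ) {t : ℝ | R < |t|}).toReal
        ≤ 2 * (1 - R * stF (Q : Measure ℝ) R 0) := tail_le _ hR
      _ < ε1 := by nlinarith [hε1, hQJ, hQJ0]
  have hPev : ∀ᶠ n in atTop, (((P n) : Measure ℝ) {t : ℝ | R < |t|}).toReal < ε1 := by
    have h5 : Tendsto (fun n => 2 * (1 - R * stF ((P n) : Measure ℝ) R 0)) atTop
        (nhds (2 * (1 - R * stF (Q : Measure ℝ) R 0))) :=
      ((tendsto_const_nhds.sub ((hstF 0 R hR).const_mul R)).const_mul 2)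
    have h6 := h5.eventually_lt_const (by nlinarith [hε1, hQJ, hQJ0] :
      2 * (1 - R * stF (Q : Measure ℝ) R 0) < ε1)
    filter_upwards [h6] with n hn
    exact lt_of_le_of_lt (tail_le _ hR) hn
  -- Step 2 : modulus of continuity on a compact set
  have hUC := (isCompact_Icc (a := -(R+1)) (b := R+1)).uniformContinuousOn_of_continuous
    (g.continuous.continuousOn)
  rw [Metric.uniformContinuousOn_iff] at hUC
  obtain ⟨δ0, hδ0, hδ0spec⟩ := hUC ε2 hε2
  set δ : ℝ := min (δ0 / 2) 1 with hδdef
  have hδ : 0 < δ := lt_min (by linarith) one_pos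
  have hδ1 : δ ≤ 1 := min_le_right _ _
  have hmod : ∀ t : ℝ, |t| ≤ R → ∀ x : ℝ, |x - t| ≤ δ → |g x - g t| ≤ ε2 := by
    intro t ht x hx
    have htI : t ∈ Set.Icc (-(R+1)) (R+1) := by
      rw [Set.mem_Icc]; rw [abs_le] at ht; constructor <;> linarith
    have hxI : x ∈ Set.Icc (-(R+1)) (R+1) := by
      rw [Set.mem_Icc]
      rw [abs_le] at hx ht
      constructor <;> linarith [hδ1]
    have hd : dist x t < δ0 := by
      rw [Real.dist_eq]
      calc |x - t| ≤ δ := hx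
        _ ≤ δ0 / 2 := min_le_left _ _
        _ < δ0 := by linarith
    have := hδ0spec x hxI t htI hd
    rw [Real.dist_eq] at this
    exact this.le
  -- Step 3 : choose y
  set c : ℝ := min 1 (ε2 / (4 * (M + 1))) with hcdef
  have hc : 0 < c := lt_min one_pos (by positivity)
  set y : ℝ := δ * c with hydef
  have hy : 0 < y := by positivity
  have hyδ : y ≤ δ := by
    calc y = δ * c := rfl
      _ ≤ δ * 1 := by
          exact mul_le_mul_of_nonneg_left (min_le_left _ _) hδ.le
      _ = δ := mul_one δ
  have hyM : 4 * M * y / δ ≤ ε2 := by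
    have h1 : 4 * M * y / δ = 4 * M * c := by
      rw [hydef]; field_simp
    rw [h1]
    have h2 : c ≤ ε2 / (4 * (M + 1)) := min_le_right _ _
    have h3 : 4 * M * c ≤ 4 * M * (ε2 / (4 * (M + 1))) :=
      mul_le_mul_of_nonneg_left h2 (by positivity)
    calc 4 * M * c ≤ 4 * M * (ε2 / (4 * (M + 1))) := h3
      _ ≤ ε2 := by
          rw [div_eq_inv_mul, ← mul_assoc]
          rw [show 4 * M * (4 * (M + 1))⁻¹ * ε2 = (M / (M + 1)) * ε2 by
            field_simp]
          nlinarith [div_le_one_of_le₀ (by linarith : M ≤ M + 1) (by linarith : (0:ℝ) ≤ M + 1)]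
  -- The smoothed function
  set Pg : ℝ → ℝ := fun t => Real.pi⁻¹ * ∫ x : ℝ, (g x) * (y / ((x - t) ^ 2 + y ^ 2))
    with hPgdef
  have hπ : (0:ℝ) < Real.pi := Real.pi_pos
  have hPgbd : ∀ t : ℝ, |Pg t| ≤ M := by
    intro t
    have hK := k_integrable (y := y) t hy
    have hgK : Integrable (fun x => g x * (y / ((x - t) ^ 2 + y ^ 2))) volume :=
      hK.bdd_mul g.continuous.aestronglyMeasurable
        (c := M) (Filter.Eventually.of_forall fun x => by rw [Real.norm_eq_abs]; exact hgM x)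
    have h1 : |∫ x : ℝ, (g x) * (y / ((x - t) ^ 2 + y ^ 2))| ≤ M * Real.pi := by
      have h2 := norm_integral_le_integral_norm (μ := volume)
        (fun x : ℝ => (g x) * (y / ((x - t) ^ 2 + y ^ 2)))
      simp only [Real.norm_eq_abs] at h2
      refine le_trans h2 ?_
      calc ∫ x : ℝ, |g x * (y / ((x - t) ^ 2 + y ^ 2))|
          ≤ ∫ x : ℝ, M * (y / ((x - t) ^ 2 + y ^ 2)) := by
            refine integral_mono hgK.abs (hK.const_mul M) fun x => ?_
            rw [abs_mul, _root_.abs_of_nonneg (k_nonneg t x hy)]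
            exact mul_le_mul_of_nonneg_right (hgM x) (k_nonneg t x hy)
        _ = M * Real.pi := by rw [MeasureTheory.integral_const_mul, k_integral t hy]
    rw [hPgdef]
    rw [abs_mul, _root_.abs_of_nonneg (inv_nonneg.mpr hπ.le)]
    calc Real.pi⁻¹ * |∫ x : ℝ, (g x) * (y / ((x - t) ^ 2 + y ^ 2))|
        ≤ Real.pi⁻¹ * (M * Real.pi) := mul_le_mul_of_nonneg_left h1 (inv_nonneg.mpr hπ.le)
      _ = M := by field_simp
  have hPgapprox : ∀ t : ℝ, |t| ≤ R → |Pg t - g t| ≤ 2 * ε2 := by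
    intro t ht
    have := conv_approx hy hδ hyδ g.continuous hgM hε2.le t (hmod t ht)
    calc |Pg t - g t| ≤ ε2 + 4 * M * y / δ := this
      _ ≤ 2 * ε2 := by linarith
  -- measurability & integrability of Pg
  have hPgSM : StronglyMeasurable Pg := by
    have hprod : StronglyMeasurable
        (fun p : ℝ × ℝ => (g p.2) * (y / ((p.2 - p.1) ^ 2 + y ^ 2))) := by
      refine Continuous.stronglyMeasurable ?_
      exact (g.continuous.comp continuous_snd).mul ((k_cont_prod hy).comp continuous_swap)
    exact stronglyMeasurable_const.mul hprod.integral_prod_right'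
  have hPgInt : ∀ (μ : Measure ℝ), IsProbabilityMeasure μ → Integrable Pg μ := by
    intro μ hμ
    refine Integrable.mono' (integrable_const M) hPgSM.aestronglyMeasurable
      (Filter.Eventually.of_forall fun t => ?_)
    rw [Real.norm_eq_abs]; exact hPgbd t
  -- the key split bound
  have hsplit : ∀ (μ : Measure ℝ), IsProbabilityMeasure μ →
      ∫ t, |Pg t - g t| ∂μ ≤ 2 * ε2 + 2 * M * (μ {t : ℝ | R < |t|}).toReal := by
    intro μ hμ
    have hmeas : MeasurableSet {t : ℝ | R < |t|} :=
      (isOpen_lt continuous_const (_root_.continuous_abs)).measurableSet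
    have hlhsInt : Integrable (fun t => |Pg t - g t|) μ :=
      ((hPgInt μ hμ).sub (g.integrable μ)).abs
    have hrhsInt : Integrable
        (fun t : ℝ => 2 * ε2 + Set.indicator {t : ℝ | R < |t|} (fun _ => 2 * M) t) μ :=
      (integrable_const _).add ((integrable_const (2 * M)).indicator hmeas)
    calc ∫ t, |Pg t - g t| ∂μ
        ≤ ∫ t, (2 * ε2 + Set.indicator {t : ℝ | R < |t|} (fun _ => 2 * M) t) ∂μ := by
          refine integral_mono hlhsInt hrhsInt fun t => ?_
          rcases le_or_gt |t| R with hc' | hc'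
          · rw [Set.indicator_of_notMem (by simp [Set.mem_setOf_eq]; exact hc')]
            have := hPgapprox t hc'
            linarith
          · rw [Set.indicator_of_mem (by exact hc')]
            have h1 : |Pg t - g t| ≤ |Pg t| + |g t| := abs_sub _ _
            have := hPgbd t; have := hgM t
            linarith
      _ = 2 * ε2 + 2 * M * (μ {t : ℝ | R < |t|}).toReal := by
          rw [integral_add (integrable_const _) ((integrable_const (2 * M)).indicator hmeas)]
          rw [MeasureTheory.integral_indicator_const _ hmeas]
          simp [measure_univ, smul_eq_mul, Measure.real]
          ring
  -- middle term : convergence of the smoothed integrals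
  have hmid : Tendsto (fun n => ∫ t, Pg t ∂((P n) : Measure ℝ)) atTop
      (nhds (∫ t, Pg t ∂(Q : Measure ℝ))) := by
    have hrepr : ∀ (μ : Measure ℝ), IsProbabilityMeasure μ →
        ∫ t, Pg t ∂μ = Real.pi⁻¹ * ∫ x : ℝ, (g x) * stF μ y x := by
      intro μ hμ
      rw [hPgdef]
      rw [MeasureTheory.integral_const_mul]
      rw [fubini_swap hy g.continuous hgM]
    have hweight := tendsto_weighted
      (ρn := fun n x => stF ((P n) : Measure ℝ) y x) (ρ := fun x => stF (Q : Measure ℝ) y x)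
      (g := fun x => g x) (M := M)
      (fun n => stF_integrable hy) (stF_integrable hy)
      (fun n x => stF_nonneg hy x)
      (fun x => hstF x y hy)
      (fun n => by rw [stF_integral hy, stF_integral hy])
      hgM
      (fun n => weighted_integrable hy g.continuous hgM)
      (weighted_integrable hy g.continuous hgM)
    have h7 := hweight.const_mul (Real.pi)⁻¹
    have e1 : ∀ n : ℕ, ∫ t, Pg t ∂((P n) : Measure ℝ)
        = Real.pi⁻¹ * ∫ x : ℝ, (g x) * stF ((P n) : Measure ℝ) y x :=
      fun n => hrepr _ inferInstance
    have e2 : ∫ t, Pg t ∂(Q : Measure ℝ)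
        = Real.pi⁻¹ * ∫ x : ℝ, (g x) * stF (Q : Measure ℝ) y x :=
      hrepr _ inferInstance
    rw [show (fun n : ℕ => ∫ t, Pg t ∂((P n) : Measure ℝ))
      = fun n : ℕ => Real.pi⁻¹ * ∫ x : ℝ, (g x) * stF ((P n) : Measure ℝ) y x
      from funext e1, e2]
    exact h7
  -- conclusion
  have hmidev : ∀ᶠ n in atTop,
      |(∫ t, Pg t ∂((P n) : Measure ℝ)) - ∫ t, Pg t ∂(Q : Measure ℝ)| < ε2 := by
    have := Metric.tendsto_atTop.mp hmid
    obtain ⟨N, hN⟩ := this ε2 hε2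
    rw [Filter.eventually_atTop]
    exact ⟨N, fun n hn => by simpa [Real.dist_eq] using hN n hn⟩
  rw [← Filter.eventually_atTop]
  filter_upwards [hPev, hmidev] with n h1 h2
  rw [Real.dist_eq]
  have hgint : ∀ (μ : Measure ℝ), IsProbabilityMeasure μ →
      |(∫ t, g t ∂μ) - ∫ t, Pg t ∂μ| ≤ ∫ t, |Pg t - g t| ∂μ := by
    intro μ hμ
    rw [← integral_sub (g.integrable μ) (hPgInt μ hμ)]
    have h3 := norm_integral_le_integral_norm (μ := μ) (fun t => g t - Pg t)
    simp only [Real.norm_eq_abs] at h3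
    refine le_trans h3 (le_of_eq (integral_congr_ae (Filter.Eventually.of_forall fun t => ?_)))
    exact abs_sub_comm _ _
  have hA : |(∫ t, g t ∂((P n) : Measure ℝ)) - ∫ t, Pg t ∂((P n) : Measure ℝ)|
      ≤ 2 * ε2 + 2 * M * ε1 := by
    refine le_trans (hgint _ (by infer_instance)) ?_
    refine le_trans (hsplit _ (by infer_instance)) ?_
    have h9 : 2 * M * ((((P n)) : Measure ℝ) {t : ℝ | R < |t|}).toReal ≤ 2 * M * ε1 :=
      mul_le_mul_of_nonneg_left h1.le (by positivity)
    linarith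
  have hC : |(∫ t, Pg t ∂(Q : Measure ℝ)) - ∫ t, g t ∂(Q : Measure ℝ)|
      ≤ 2 * ε2 + 2 * M * ε1 := by
    rw [abs_sub_comm]
    refine le_trans (hgint _ (by infer_instance)) ?_
    refine le_trans (hsplit _ (by infer_instance)) ?_
    have h9 : 2 * M * ((Q : Measure ℝ) {t : ℝ | R < |t|}).toReal ≤ 2 * M * ε1 :=
      mul_le_mul_of_nonneg_left hQtail.le (by positivity)
    linarith
  have hMε1 : 2 * M * ε1 ≤ ε / 8 := by
    rw [hε1def]
    rw [show 2 * M * (ε / (16 * (M + 1))) = (M / (M + 1)) * (ε / 8) by field_simp; ring]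
    exact mul_le_of_le_one_left (by positivity)
      (div_le_one_of_le₀ (by linarith) (by linarith))
  calc |(∫ t, g t ∂((P n) : Measure ℝ)) - ∫ t, g t ∂(Q : Measure ℝ)|
      ≤ |(∫ t, g t ∂((P n) : Measure ℝ)) - ∫ t, Pg t ∂((P n) : Measure ℝ)|
        + |(∫ t, Pg t ∂((P n) : Measure ℝ)) - ∫ t, Pg t ∂(Q : Measure ℝ)|
        + |(∫ t, Pg t ∂(Q : Measure ℝ)) - ∫ t, g t ∂(Q : Measure ℝ)| := by
        have := abs_sub_le (∫ t, g t ∂((P n) : Measure ℝ)) (∫ t, Pg t ∂((P n) : Measure ℝ))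
          (∫ t, g t ∂(Q : Measure ℝ))
        have h8 := abs_sub_le (∫ t, Pg t ∂((P n) : Measure ℝ)) (∫ t, Pg t ∂(Q : Measure ℝ))
          (∫ t, g t ∂(Q : Measure ℝ))
        linarith
    _ < (2 * ε2 + 2 * M * ε1) + ε2 + (2 * ε2 + 2 * M * ε1) := by
        have := hA; have := hC; linarith
    _ ≤ ε := by
        rw [hε2def] at *
        linarith [hMε1]
end

section
/- Let Σ be an N × n complex (or real) matrix, write ξᵢ for the i-th row of Σ and Σ_{(i)} for the matrix obtained from Σ by deleting row i. Then for z ∈ ℂ⁺, the i-th diagonal entry of (Σ Σᵀ - z I_N)⁻¹ equals 1 / ( -z - z · ξᵢ (Σ_{(i)}ᵀ Σ_{(i)} - z I_n)⁻¹ ξᵢᵀ ). -/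
open Matrix Complex

lemma herm_resolvent_isUnit {m : Type*} [Fintype m] [DecidableEq m]
    {A : Matrix m m ℂ} (hA : A.IsHermitian) {z : ℂ} (hz : z.im ≠ 0) :
    IsUnit (A - z • (1 : Matrix m m ℂ)) := by
  rw [Matrix.isUnit_iff_isUnit_det, isUnit_iff_ne_zero]
  set U : Matrix m m ℂ := (hA.eigenvectorUnitary : Matrix m m ℂ) with hU
  have hUU : U * star U = 1 := (Matrix.mem_unitaryGroup_iff).mp hA.eigenvectorUnitary.2
  have hdecomp : A - z • 1 =
      U * (Matrix.diagonal (fun i => (hA.eigenvalues i : ℂ) - z)) * star U := by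
    have h1 : z • (1 : Matrix m m ℂ) = U * (z • (1 : Matrix m m ℂ)) * star U := by
      rw [Matrix.mul_smul, Matrix.smul_mul, Matrix.mul_one, hUU]
    conv_lhs => rw [hA.spectral_theorem, Unitary.conjStarAlgAut_apply, ← hU, h1]
    rw [← Matrix.sub_mul, ← Matrix.mul_sub]
    congr 2
    rw [Matrix.smul_one_eq_diagonal, Matrix.diagonal_sub]
    rfl
  rw [hdecomp, Matrix.det_mul, Matrix.det_mul, mul_comm (U.det), mul_assoc,
    ← Matrix.det_mul, hUU, Matrix.det_one, mul_one, Matrix.det_diagonal]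
  refine Finset.prod_ne_zero_iff.mpr fun j _ => fun h => hz ?_
  have := congrArg Complex.im (sub_eq_zero.mp h)
  simpa using this.symm

/-- Schur complement formula for a diagonal resolvent entry: for an `N × n` real matrix `Σ`,
`((ΣΣᵀ - zI)⁻¹)ᵢᵢ = (-z - z ξᵢ (Σ₍ᵢ₎ᵀΣ₍ᵢ₎ - zI)⁻¹ ξᵢᵀ)⁻¹` for `z ∈ ℂ⁺`, where `ξᵢ` is the
`i`-th row of `Σ` and `Σ₍ᵢ₎` is `Σ` with row `i` deleted. -/
theorem stmt_6 (N n : ℕ) (S₀ : Matrix (Fin N) (Fin n) ℝ) (i : Fin N) (z : ℂ)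
    (hz : 0 < z.im)
    (S : Matrix (Fin N) (Fin n) ℂ) (hS : S = S₀.map Complex.ofReal)
    (Si : Matrix {j : Fin N // j ≠ i} (Fin n) ℂ) (hSi : Si = S.submatrix Subtype.val id)
    (ξ : Fin n → ℂ) (hξ : ξ = S i) :
    ((S * Sᵀ - z • (1 : Matrix (Fin N) (Fin N) ℂ))⁻¹) i i
      = (-z - z * (ξ ⬝ᵥ ((Siᵀ * Si - z • (1 : Matrix (Fin n) (Fin n) ℂ))⁻¹ *ᵥ ξ)))⁻¹ := by
  classical
  have hzne : z.im ≠ 0 := hz.ne'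
  have hSreal : ∀ a b, star (S a b) = S a b := by
    intro a b; simp [hS]
  have hSireal : ∀ a b, star (Si a b) = Si a b := by
    intro a b; simp [hSi, hS]
  have hAH : (S * Sᵀ).IsHermitian := by
    rw [Matrix.IsHermitian, Matrix.conjTranspose_mul]
    ext a b
    simp only [Matrix.mul_apply, Matrix.conjTranspose_apply, Matrix.transpose_apply]
    exact Finset.sum_congr rfl fun k _ => by rw [hSreal, hSreal, mul_comm]
  have hDH : (Si * Siᵀ).IsHermitian := by
    rw [Matrix.IsHermitian, Matrix.conjTranspose_mul]
    ext a b
    simp only [Matrix.mul_apply, Matrix.conjTranspose_apply, Matrix.transpose_apply]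
    exact Finset.sum_congr rfl fun k _ => by rw [hSireal, hSireal, mul_comm]
  have hGH : (Siᵀ * Si).IsHermitian := by
    rw [Matrix.IsHermitian, Matrix.conjTranspose_mul]
    ext a b
    simp only [Matrix.mul_apply, Matrix.conjTranspose_apply, Matrix.transpose_apply]
    exact Finset.sum_congr rfl fun k _ => by rw [hSireal, hSireal, mul_comm]
  set A : Matrix (Fin N) (Fin N) ℂ := S * Sᵀ - z • 1 with hA
  set D : Matrix {j : Fin N // j ≠ i} {j : Fin N // j ≠ i} ℂ := Si * Siᵀ - z • 1 with hD
  set G : Matrix (Fin n) (Fin n) ℂ := Siᵀ * Si - z • 1 with hG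
  have hA_unit : IsUnit A := herm_resolvent_isUnit hAH hzne
  have hD_unit : IsUnit D := herm_resolvent_isUnit hDH hzne
  have hG_unit : IsUnit G := herm_resolvent_isUnit hGH hzne
  have hDd := (Matrix.isUnit_iff_isUnit_det D).mp hD_unit
  have hGd := (Matrix.isUnit_iff_isUnit_det G).mp hG_unit
  -- key identity
  have h1 : G * Siᵀ = Siᵀ * D := by
    rw [hG, hD, Matrix.sub_mul, Matrix.mul_sub, Matrix.smul_mul, Matrix.mul_smul,
      Matrix.one_mul, Matrix.mul_one, Matrix.mul_assoc]
  have h2 : Siᵀ * D⁻¹ = G⁻¹ * Siᵀ :=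
    calc Siᵀ * D⁻¹ = G⁻¹ * (G * Siᵀ) * D⁻¹ := by
          rw [← Matrix.mul_assoc, Matrix.nonsing_inv_mul G hGd, Matrix.one_mul]
      _ = G⁻¹ * Siᵀ * (D * D⁻¹) := by rw [h1, Matrix.mul_assoc, Matrix.mul_assoc, Matrix.mul_assoc]
      _ = G⁻¹ * Siᵀ := by rw [Matrix.mul_nonsing_inv D hDd, Matrix.mul_one]
  have key : Siᵀ * D⁻¹ * Si = 1 + z • G⁻¹ := by
    have hSS : Siᵀ * Si = G + z • 1 := by rw [hG, sub_add_cancel]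
    rw [h2, Matrix.mul_assoc, hSS, Matrix.mul_add, Matrix.nonsing_inv_mul G hGd,
      Matrix.mul_smul, Matrix.mul_one]
  -- equivalence
  let e : Unit ⊕ {j : Fin N // j ≠ i} ≃ Fin N :=
    { toFun := fun x => x.elim (fun _ => i) Subtype.val
      invFun := fun j => if h : j = i then Sum.inl () else Sum.inr ⟨j, h⟩
      left_inv := fun x => by
        cases x with
        | inl u => simp
        | inr j => simp [j.2]
      right_inv := fun j => by by_cases h : j = i <;> simp [h] }
  set v : {j : Fin N // j ≠ i} → ℂ := Si *ᵥ ξ with hv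
  set a : Matrix Unit Unit ℂ := Matrix.of fun _ _ => ξ ⬝ᵥ ξ - z with ha
  set b : Matrix Unit {j : Fin N // j ≠ i} ℂ := Matrix.replicateRow Unit v with hb
  set c : Matrix {j : Fin N // j ≠ i} Unit ℂ := Matrix.replicateCol Unit v with hc
  have hblock : A.submatrix e e = Matrix.fromBlocks a b c D := by
    ext x y
    cases x with
    | inl u =>
      cases y with
      | inl u' =>
        simp [e, ha, hA, Matrix.mul_apply, Matrix.one_apply, dotProduct, hξ]
      | inr j =>
        simp [e, hb, hv, hA, Matrix.mul_apply, Matrix.one_apply, Matrix.mulVec,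
          dotProduct, hξ, hSi, Ne.symm j.2, mul_comm]
    | inr j =>
      cases y with
      | inl u' =>
        simp [e, hc, hv, hA, Matrix.mul_apply, Matrix.one_apply, Matrix.mulVec,
          dotProduct, hξ, hSi, j.2]
      | inr k =>
        by_cases hjk : j = k
        · subst hjk
          simp [e, hD, hA, Matrix.mul_apply, Matrix.one_apply, hSi]
        · have : (j : Fin N) ≠ (k : Fin N) := fun h => hjk (Subtype.ext h)
          simp [e, hD, hA, Matrix.mul_apply, Matrix.one_apply, hSi, this, hjk]
  -- invertibility of blocks
  haveI instD : Invertible D := hD_unit.nonempty_invertible.some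
  haveI instFB : Invertible (Matrix.fromBlocks a b c D) := by
    rw [← hblock]
    haveI := hA_unit.nonempty_invertible.some
    exact Matrix.submatrixEquivInvertible A e e
  haveI instSchur : Invertible (a - b * ⅟D * c) :=
    Matrix.invertibleOfFromBlocks₂₂Invertible a b c D
  -- the Schur complement entry
  have hschur : (a - b * ⅟D * c) () () =
      -z - z * (ξ ⬝ᵥ (G⁻¹ *ᵥ ξ)) := by
    have hinv : (⅟D : Matrix _ _ ℂ) = D⁻¹ := invOf_eq_nonsing_inv D
    have hbdc : b * ⅟D * c = Matrix.replicateRow Unit (v ᵥ* D⁻¹) * Matrix.replicateCol Unit v := by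
      rw [hinv, hb, hc, Matrix.replicateRow_vecMul]
    have hentry : (b * ⅟D * c) () () = v ⬝ᵥ (D⁻¹ *ᵥ v) := by
      rw [hbdc, Matrix.replicateRow_mul_replicateCol_apply, ← Matrix.dotProduct_mulVec]
    have hvv : v ⬝ᵥ (D⁻¹ *ᵥ v) = ξ ⬝ᵥ ((Siᵀ * D⁻¹ * Si) *ᵥ ξ) := by
      rw [hv, ← Matrix.mulVec_mulVec, ← Matrix.mulVec_mulVec, ← Matrix.vecMul_transpose,
        Matrix.dotProduct_mulVec ξ Siᵀ, Matrix.vecMul_transpose]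
    have : (a - b * ⅟D * c) () () = (ξ ⬝ᵥ ξ - z) - ξ ⬝ᵥ ((Siᵀ * D⁻¹ * Si) *ᵥ ξ) := by
      rw [Matrix.sub_apply, hentry, hvv, ha]; rfl
    rw [this, key]
    rw [Matrix.add_mulVec, Matrix.one_mulVec, Matrix.smul_mulVec,
      dotProduct_add, dotProduct_smul, smul_eq_mul]
    ring
  -- final computation
  have hii : A⁻¹ i i = ((Matrix.fromBlocks a b c D)⁻¹) (Sum.inl ()) (Sum.inl ()) := by
    rw [← hblock, Matrix.inv_submatrix_equiv]
    rfl
  rw [hii, ← invOf_eq_nonsing_inv, Matrix.invOf_fromBlocks₂₂_eq,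
    Matrix.fromBlocks_apply₁₁, invOf_eq_nonsing_inv]
  rw [Matrix.inv_def, Matrix.adjugate_subsingleton, Matrix.det_unique]
  simp only [Matrix.smul_apply, Matrix.one_apply_eq, smul_eq_mul, mul_one]
  rw [show (default : Unit) = () from rfl, hschur]
  exact Ring.inverse_eq_inv _
end

section
/- Let A and B be N × n real matrices and let F^{AAᵀ} and F^{BBᵀ} denote the cumulative distribution functions of the empirical spectral distributions of A Aᵀ and B Bᵀ. Then ‖F^{AAᵀ} - F^{BBᵀ}‖_∞ ≤ rank(A - B)/N. -/
open Matrix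

section aux

variable {N : ℕ}

private lemma quad_dot (M : Matrix (Fin N) (Fin N) ℝ) (v : EuclideanSpace ℝ (Fin N)) :
    (inner ℝ v (Matrix.toEuclideanLin M v) : ℝ)
      = dotProduct (WithLp.equiv 2 _ v) (M *ᵥ (WithLp.equiv 2 _ v)) := by
  rw [EuclideanSpace.inner_eq_star_dotProduct, dotProduct_comm]
  rfl

private lemma coeff_zero {M : Matrix (Fin N) (Fin N) ℝ} (hM : M.IsHermitian)
    (p : Fin N → Prop) (v : EuclideanSpace ℝ (Fin N))
    (hv : v ∈ Submodule.span ℝ (Set.range fun i : {i // p i} => hM.eigenvectorBasis i))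
    (i : Fin N) (hi : ¬ p i) : (inner ℝ (hM.eigenvectorBasis i) v : ℝ) = 0 := by
  induction hv using Submodule.span_induction with
  | mem y hy =>
    obtain ⟨j, rfl⟩ := hy
    exact hM.eigenvectorBasis.orthonormal.2 (fun h => hi (h ▸ j.2))
  | zero => simp
  | add y z _ _ hy hz => rw [inner_add_right, hy, hz, add_zero]
  | smul c y _ hy => rw [inner_smul_right, hy, mul_zero]

private lemma quad_eq {M : Matrix (Fin N) (Fin N) ℝ} (hM : M.IsHermitian)
    (v : EuclideanSpace ℝ (Fin N)) :
    (inner ℝ v (Matrix.toEuclideanLin M v) : ℝ)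
      = ∑ i, hM.eigenvalues i * (inner ℝ (hM.eigenvectorBasis i) v : ℝ) ^ 2 := by
  set b := hM.eigenvectorBasis with hb
  have hLb : ∀ i, Matrix.toEuclideanLin M (b i) = hM.eigenvalues i • b i := by
    intro i
    apply (WithLp.equiv 2 (Fin N → ℝ)).injective
    simpa using hM.mulVec_eigenvectorBasis i
  have hexp : Matrix.toEuclideanLin M v
      = ∑ i, (hM.eigenvalues i * (inner ℝ (b i) v : ℝ)) • b i := by
    conv_lhs => rw [← b.sum_repr' v]
    rw [map_sum]
    refine Finset.sum_congr rfl fun i _ => ?_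
    rw [LinearMap.map_smul, hLb i, smul_smul, mul_comm]
  rw [hexp, inner_sum]
  refine Finset.sum_congr rfl fun i _ => ?_
  rw [real_inner_smul_right, real_inner_comm v (b i)]
  ring

private lemma norm_eq {M : Matrix (Fin N) (Fin N) ℝ} (hM : M.IsHermitian)
    (v : EuclideanSpace ℝ (Fin N)) :
    (inner ℝ v v : ℝ) = ∑ i, (inner ℝ (hM.eigenvectorBasis i) v : ℝ) ^ 2 := by
  rw [← hM.eigenvectorBasis.sum_inner_mul_inner v v]
  refine Finset.sum_congr rfl fun i _ => ?_
  rw [real_inner_comm v (hM.eigenvectorBasis i), sq]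

private lemma quad_le {M : Matrix (Fin N) (Fin N) ℝ} (hM : M.IsHermitian) (x : ℝ)
    (v : EuclideanSpace ℝ (Fin N))
    (hv : v ∈ Submodule.span ℝ
      (Set.range fun i : {i // hM.eigenvalues i ≤ x} => hM.eigenvectorBasis i)) :
    (inner ℝ v (Matrix.toEuclideanLin M v) : ℝ) ≤ x * inner ℝ v v := by
  rw [quad_eq hM v, norm_eq hM v, Finset.mul_sum]
  refine Finset.sum_le_sum fun i _ => ?_
  by_cases hi : hM.eigenvalues i ≤ x
  · exact mul_le_mul_of_nonneg_right hi (sq_nonneg _)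
  · rw [coeff_zero hM _ v hv i hi]
    simp

private lemma quad_lt {M : Matrix (Fin N) (Fin N) ℝ} (hM : M.IsHermitian) (x : ℝ)
    (v : EuclideanSpace ℝ (Fin N))
    (hv : v ∈ Submodule.span ℝ
      (Set.range fun i : {i // ¬ hM.eigenvalues i ≤ x} => hM.eigenvectorBasis i))
    (hv0 : v ≠ 0) :
    x * (inner ℝ v v : ℝ) < inner ℝ v (Matrix.toEuclideanLin M v) := by
  rw [quad_eq hM v, norm_eq hM v, Finset.mul_sum]
  have hex : ∃ i, (inner ℝ (hM.eigenvectorBasis i) v : ℝ) ≠ 0 := by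
    by_contra h
    push_neg at h
    apply hv0
    rw [← hM.eigenvectorBasis.sum_repr' v]
    simp [h]
  obtain ⟨i0, hi0⟩ := hex
  have hp0 : ¬ hM.eigenvalues i0 ≤ x := by
    intro h
    exact hi0 (coeff_zero hM _ v hv i0 (not_not_intro h))
  refine Finset.sum_lt_sum (fun i _ => ?_) ⟨i0, Finset.mem_univ _, ?_⟩
  · by_cases hi : ¬ hM.eigenvalues i ≤ x
    · exact mul_le_mul_of_nonneg_right (le_of_lt (not_le.mp hi)) (sq_nonneg _)
    · rw [coeff_zero hM _ v hv i hi]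
      simp
  · exact mul_lt_mul_of_pos_right (not_le.mp hp0)
      (lt_of_le_of_ne (sq_nonneg _) (Ne.symm (pow_ne_zero 2 hi0)))

private lemma gram_dot {n : ℕ} (C : Matrix (Fin N) (Fin n) ℝ) (u : Fin N → ℝ) :
    dotProduct u ((C * Cᵀ) *ᵥ u) = dotProduct (Cᵀ *ᵥ u) (Cᵀ *ᵥ u) := by
  rw [← Matrix.mulVec_mulVec, Matrix.dotProduct_mulVec, Matrix.mulVec_transpose]

private lemma rank_neg' {m k : ℕ} (M : Matrix (Fin m) (Fin k) ℝ) : (-M).rank = M.rank := by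
  have h : (-M).mulVecLin = -M.mulVecLin := by
    ext v
    simp [Matrix.neg_mulVec]
  unfold Matrix.rank
  rw [h, LinearMap.range_neg]

private lemma count_le (N n : ℕ) (A B : Matrix (Fin N) (Fin n) ℝ)
    (hA : (A * Aᵀ).IsHermitian) (hB : (B * Bᵀ).IsHermitian) (x : ℝ) :
    (Finset.univ.filter fun i => hA.eigenvalues i ≤ x).card ≤
      (Finset.univ.filter fun i => hB.eigenvalues i ≤ x).card + (A - B).rank := by
  classical
  set E := EuclideanSpace ℝ (Fin N)
  set V : Submodule ℝ E :=
    Submodule.span ℝ (Set.range fun i : {i // hA.eigenvalues i ≤ x} => hA.eigenvectorBasis i)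
  set W : Submodule ℝ E :=
    Submodule.span ℝ (Set.range fun i : {i // ¬ hB.eigenvalues i ≤ x} => hB.eigenvectorBasis i)
  set f : E →ₗ[ℝ] (Fin n → ℝ) :=
    ((A - B)ᵀ).mulVecLin ∘ₗ (WithLp.linearEquiv 2 ℝ (Fin N → ℝ)).toLinearMap with hf
  set K := LinearMap.ker f with hK
  have hVdim : Module.finrank ℝ V
      = (Finset.univ.filter fun i => hA.eigenvalues i ≤ x).card := by
    exact (finrank_span_eq_card
      ((hA.eigenvectorBasis.orthonormal.linearIndependent).comp _ Subtype.val_injective)).trans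
      (Fintype.card_subtype _)
  have hWdim : Module.finrank ℝ W
      = (Finset.univ.filter fun i => ¬ hB.eigenvalues i ≤ x).card := by
    exact (finrank_span_eq_card
      ((hB.eigenvectorBasis.orthonormal.linearIndependent).comp _ Subtype.val_injective)).trans
      (Fintype.card_subtype _)
  have hKdim : Module.finrank ℝ K + (A - B).rank = N := by
    have h1 := f.finrank_range_add_finrank_ker
    have h2 : LinearMap.range f = LinearMap.range ((A - B)ᵀ).mulVecLin :=
      LinearMap.range_comp_of_range_eq_top _ (LinearEquiv.range _)
    have h3 : Module.finrank ℝ (LinearMap.range ((A - B)ᵀ).mulVecLin) = (A - B).rank := by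
      rw [← Matrix.rank_transpose (A - B)]
      rfl
    rw [h2, h3, finrank_euclideanSpace_fin, ← hK] at h1
    omega
  have htriv : V ⊓ (W ⊓ K) = ⊥ := by
    rw [Submodule.eq_bot_iff]
    rintro v hv
    simp only [Submodule.mem_inf] at hv
    obtain ⟨hvV, hvW, hvK⟩ := hv
    by_contra hv0
    have h1 : (inner ℝ v (Matrix.toEuclideanLin (A * Aᵀ) v) : ℝ) ≤ x * inner ℝ v v :=
      quad_le hA x v hvV
    have h2 : x * (inner ℝ v v : ℝ) < inner ℝ v (Matrix.toEuclideanLin (B * Bᵀ) v) :=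
      quad_lt hB x v hvW hv0
    have hker : (A - B)ᵀ *ᵥ (WithLp.equiv 2 (Fin N → ℝ) v) = 0 := hvK
    have heq : Aᵀ *ᵥ (WithLp.equiv 2 (Fin N → ℝ) v) = Bᵀ *ᵥ (WithLp.equiv 2 (Fin N → ℝ) v) := by
      rw [Matrix.transpose_sub, Matrix.sub_mulVec] at hker
      exact sub_eq_zero.mp hker
    have e1 : (inner ℝ v (Matrix.toEuclideanLin (A * Aᵀ) v) : ℝ)
        = dotProduct (Aᵀ *ᵥ WithLp.equiv 2 (Fin N → ℝ) v)
            (Aᵀ *ᵥ WithLp.equiv 2 (Fin N → ℝ) v) := by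
      rw [quad_dot, gram_dot]
    have e2 : (inner ℝ v (Matrix.toEuclideanLin (B * Bᵀ) v) : ℝ)
        = dotProduct (Bᵀ *ᵥ WithLp.equiv 2 (Fin N → ℝ) v)
            (Bᵀ *ᵥ WithLp.equiv 2 (Fin N → ℝ) v) := by
      rw [quad_dot, gram_dot]
    rw [e1, heq, ← e2] at h1
    linarith
  have hsub1 : Module.finrank ℝ V + Module.finrank ℝ ↥(W ⊓ K) ≤ N := by
    have h := Submodule.finrank_sup_add_finrank_inf_eq V (W ⊓ K)
    have hle : Module.finrank ℝ ↥(V ⊔ (W ⊓ K)) ≤ N := by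
      have := Submodule.finrank_le (V ⊔ (W ⊓ K))
      rwa [finrank_euclideanSpace_fin] at this
    rw [htriv, finrank_bot] at h
    omega
  have hsub2 : Module.finrank ℝ W + Module.finrank ℝ K
      ≤ N + Module.finrank ℝ ↥(W ⊓ K) := by
    have h := Submodule.finrank_sup_add_finrank_inf_eq W K
    have hle : Module.finrank ℝ ↥(W ⊔ K) ≤ N := by
      have := Submodule.finrank_le (W ⊔ K)
      rwa [finrank_euclideanSpace_fin] at this
    omega
  have hT : (Finset.univ.filter fun i => hB.eigenvalues i ≤ x).card
      + (Finset.univ.filter fun i => ¬ hB.eigenvalues i ≤ x).card = N := by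
    rw [Finset.card_filter_add_card_filter_not]
    simp
  omega

end aux

/-- Rank inequality for empirical spectral distribution functions of Gram matrices:
`‖F^{AAᵀ} - F^{BBᵀ}‖_∞ ≤ rank(A - B)/N`. -/
theorem stmt_11 (N n : ℕ) (hN : 0 < N) (A B : Matrix (Fin N) (Fin n) ℝ)
    (hA : (A * Aᵀ).IsHermitian) (hB : (B * Bᵀ).IsHermitian) :
    ∀ x : ℝ,
      |((Finset.univ.filter fun i => hA.eigenvalues i ≤ x).card : ℝ) / N
          - ((Finset.univ.filter fun i => hB.eigenvalues i ≤ x).card : ℝ) / N|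
        ≤ ((A - B).rank : ℝ) / N := by
  intro x
  have h1 := count_le N n A B hA hB x
  have h2 := count_le N n B A hB hA x
  have hr : (B - A).rank = (A - B).rank := by
    rw [show B - A = -(A - B) by abel]
    exact rank_neg' (A - B)
  rw [hr] at h2
  have hNpos : (0 : ℝ) < N := by exact_mod_cast hN
  rw [div_sub_div_same, abs_div, abs_of_nonneg (le_of_lt hNpos),
    div_le_div_iff_of_pos_right hNpos]
  rw [abs_sub_le_iff]
  constructor <;>
  · have h1' : ((Finset.univ.filter fun i => hA.eigenvalues i ≤ x).card : ℝ)
        ≤ (Finset.univ.filter fun i => hB.eigenvalues i ≤ x).card + (A - B).rank := by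
      exact_mod_cast h1
    have h2' : ((Finset.univ.filter fun i => hB.eigenvalues i ≤ x).card : ℝ)
        ≤ (Finset.univ.filter fun i => hA.eigenvalues i ≤ x).card + (A - B).rank := by
      exact_mod_cast h2
    linarith
end

section
/- Let H be a probability measure with compact support ℋ ⊂ [0,1] × ℝ and let σ²: [0,1]² → [0, σ²_max] be continuous, c ∈ (0,1]. For z ∈ ℂ⁺ with Im(z) sufficiently large and |Re(z)| ≤ Im(z), if (π_z, π̃_z) and (ρ_z, ρ̃_z) are two pairs of Stieltjes kernels (complex measures supported in ℋ and ℋ̃ respectively) both solving the coupled fixed-point equations ∫g dπ_z = ∫ g(u,λ) / ( -z(1 + ∫σ²(u,t) π̃_z(dt,dζ)) + λ/(1 + c∫σ²(t,cu) π_z(dt,dζ)) ) H(du,dλ) and the analogous equation for π̃_z, then ‖π_z - ρ_z‖_tv = ‖π̃_z - ρ̃_z‖_tv = 0, i.e., the solution is unique. -/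
open MeasureTheory Complex

/-- A Stieltjes kernel supported in `S`, represented through its integration functional
`g ↦ ∫ g dμ_z` acting on bounded continuous functions: `z ↦ ∫ g dμ_z` is analytic on ℂ⁺,
`|∫ g dμ_z| ≤ ‖g‖_∞ / Im z`, and for nonnegative (real-valued) `g` both `Im ∫ g dμ_z ≥ 0`
and `Im (z ∫ g dμ_z) ≥ 0`; moreover `∫ g dμ_z = 0` whenever `g` vanishes on `S`. -/
structure StieltjesKernelOn {α : Type*} [TopologicalSpace α] (S : Set α) where
  integ : ℂ → BoundedContinuousFunction α ℂ →ₗ[ℂ] ℂ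
  analytic : ∀ g, DifferentiableOn ℂ (fun z => integ z g) {z : ℂ | 0 < z.im}
  norm_le : ∀ z : ℂ, 0 < z.im → ∀ g, ‖integ z g‖ ≤ ‖g‖ / z.im
  im_nonneg : ∀ z : ℂ, 0 < z.im → ∀ g, (∀ p, 0 ≤ (g p).re ∧ (g p).im = 0) →
    0 ≤ (integ z g).im
  mul_im_nonneg : ∀ z : ℂ, 0 < z.im → ∀ g, (∀ p, 0 ≤ (g p).re ∧ (g p).im = 0) →
    0 ≤ (z * integ z g).im
  supported : ∀ z : ℂ, 0 < z.im → ∀ g, (∀ p ∈ S, g p = 0) → integ z g = 0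

/-- The pair of kernels `(π, πt)` solves the coupled fixed-point system (1)–(2) at `z`.
Here `sL u` and `sA u` are the bounded continuous functions `(t,ζ) ↦ σ²(u,t)` and
`(t,ζ) ↦ σ²(t,u)` respectively, and `H` is the limiting distribution. -/
def SolvesSystem (c : ℝ) (H : Measure (ℝ × ℝ))
    {S S' : Set (ℝ × ℝ)} (π : StieltjesKernelOn S) (πt : StieltjesKernelOn S')
    (sL sA : ℝ → BoundedContinuousFunction (ℝ × ℝ) ℂ) (z : ℂ) : Prop :=
  (∀ g : BoundedContinuousFunction (ℝ × ℝ) ℂ,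
      π.integ z g = ∫ p : ℝ × ℝ,
        g p / (-z * (1 + πt.integ z (sL p.1))
          + (p.2 : ℂ) / (1 + c * π.integ z (sA (c * p.1)))) ∂H)
    ∧ ∀ g : BoundedContinuousFunction (ℝ × ℝ) ℂ,
      πt.integ z g = c * (∫ p : ℝ × ℝ,
          g (c * p.1, p.2) / (-z * (1 + c * π.integ z (sA (c * p.1)))
            + (p.2 : ℂ) / (1 + πt.integ z (sL p.1))) ∂H)
        + (1 - c) * ∫ u in c..(1 : ℝ),
            g (u, 0) / (-z * (1 + c * π.integ z (sA u)))


lemma integ_norm_le_of_forall_mem {S : Set (ℝ × ℝ)} (hS : IsCompact S)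
    (κ : StieltjesKernelOn S) (z : ℂ) (hz : 0 < z.im)
    (h : BoundedContinuousFunction (ℝ × ℝ) ℂ) (m : ℝ) (hm : 0 ≤ m)
    (hb : ∀ p ∈ S, ‖h p‖ ≤ m) : ‖κ.integ z h‖ ≤ m / z.im := by
  refine le_of_forall_pos_le_add fun ε hε => ?_
  set ε' : ℝ := ε * z.im with hε'def
  have hε' : 0 < ε' := mul_pos hε hz
  set t : Set (ℝ × ℝ) := {p | m + ε' ≤ ‖h p‖} with ht
  have htc : IsClosed t := isClosed_le continuous_const h.continuous.norm
  have hdisj : Disjoint S t := by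
    rw [Set.disjoint_left]
    intro p hp hpt
    have h1 := hb p hp
    have h2 : m + ε' ≤ ‖h p‖ := hpt
    linarith
  obtain ⟨f, hf0, hf1, hf01⟩ := exists_continuous_zero_one_of_isClosed hS.isClosed htc hdisj
  set ψ : BoundedContinuousFunction (ℝ × ℝ) ℂ :=
    BoundedContinuousFunction.ofNormedAddCommGroup (fun p => ((1 - f p : ℝ) : ℂ))
      (by continuity) 1 (fun p => by
        rw [Complex.norm_real, Real.norm_eq_abs]
        have := hf01 p
        rw [Set.mem_Icc] at this
        rw [abs_le]; constructor <;> linarith [this.1, this.2]) with hψ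
  have hψ_apply : ∀ p, ψ p = ((1 - f p : ℝ) : ℂ) := fun p => rfl
  have hsupp : κ.integ z h = κ.integ z (h * ψ) := by
    have : κ.integ z (h - h * ψ) = 0 := by
      apply κ.supported z hz
      intro p hp
      simp only [BoundedContinuousFunction.coe_sub, BoundedContinuousFunction.coe_mul,
        Pi.sub_apply, Pi.mul_apply]
      rw [hψ_apply p, hf0 hp]
      simp
    rw [map_sub] at this
    exact sub_eq_zero.mp this
  have hnorm : ‖h * ψ‖ ≤ m + ε' := by
    refine (BoundedContinuousFunction.norm_le (by linarith)).mpr fun p => ?_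
    by_cases hpt : p ∈ t
    · have : f p = 1 := hf1 hpt
      simp only [BoundedContinuousFunction.coe_mul, Pi.mul_apply]
      rw [hψ_apply p, this]
      simp [hm, hε'.le]
      positivity
    · have hlt : ‖h p‖ < m + ε' := by
        by_contra hcon
        exact hpt (le_of_not_gt hcon)
      simp only [BoundedContinuousFunction.coe_mul, Pi.mul_apply]
      rw [norm_mul]
      have hψle : ‖ψ p‖ ≤ 1 := by
        rw [hψ_apply p, Complex.norm_real, Real.norm_eq_abs]
        have := hf01 p
        rw [Set.mem_Icc] at this
        rw [abs_le]; constructor <;> linarith [this.1, this.2]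
      calc ‖h p‖ * ‖ψ p‖ ≤ ‖h p‖ * 1 := by
            apply mul_le_mul_of_nonneg_left hψle (norm_nonneg _)
        _ ≤ m + ε' := by rw [mul_one]; exact hlt.le
  calc ‖κ.integ z h‖ = ‖κ.integ z (h * ψ)‖ := by rw [hsupp]
    _ ≤ ‖h * ψ‖ / z.im := κ.norm_le z hz _
    _ ≤ (m + ε') / z.im := by gcongr
    _ = m / z.im + ε := by field_simp; rw [hε'def]; ring
lemma continuous_integ_param {S : Set (ℝ × ℝ)} (hS : IsCompact S)
    (hS1 : S ⊆ Set.Icc (0:ℝ) 1 ×ˢ Set.univ)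
    (κ : StieltjesKernelOn S) (z : ℂ) (hz : 0 < z.im)
    (τ : ℝ → ℝ → ℝ) (hτ : Continuous fun q : ℝ × ℝ => τ q.1 q.2)
    (f : ℝ → BoundedContinuousFunction (ℝ × ℝ) ℂ)
    (hf : ∀ u p, f u p = (τ p.1 u : ℂ)) :
    Continuous fun u => κ.integ z (f u) := by
  rw [Metric.continuous_iff]
  intro u0 ε hε
  set A : Set (ℝ × ℝ) := Set.Icc (0:ℝ) 1 ×ˢ Set.Icc (u0-1) (u0+1) with hA
  have hAc : IsCompact A := isCompact_Icc.prod isCompact_Icc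
  have huc : UniformContinuousOn (fun q : ℝ × ℝ => τ q.1 q.2) A :=
    hAc.uniformContinuousOn_of_continuous hτ.continuousOn
  rw [Metric.uniformContinuousOn_iff] at huc
  obtain ⟨δ, hδ, hucd⟩ := huc (ε * z.im / 2) (by positivity)
  refine ⟨min δ 1, by positivity, fun u hu => ?_⟩
  have hud : dist u u0 < δ := lt_of_lt_of_le hu (min_le_left _ _)
  have hu1 : dist u u0 < 1 := lt_of_lt_of_le hu (min_le_right _ _)
  rw [dist_eq_norm, ← map_sub]
  have hbnd : ∀ p ∈ S, ‖(f u - f u0) p‖ ≤ ε * z.im / 2 := by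
    intro p hp
    have hp1 : p.1 ∈ Set.Icc (0:ℝ) 1 := (hS1 hp).1
    have hmemu : ((p.1, u) : ℝ × ℝ) ∈ A := by
      refine ⟨hp1, ?_⟩
      rw [Real.dist_eq, abs_lt] at hu1
      exact Set.mem_Icc.mpr ⟨by linarith [hu1.1], by linarith [hu1.2]⟩
    have hmemu0 : ((p.1, u0) : ℝ × ℝ) ∈ A := by
      refine ⟨hp1, Set.mem_Icc.mpr ⟨by linarith, by linarith⟩⟩
    have hdq : dist ((p.1, u) : ℝ × ℝ) ((p.1, u0) : ℝ × ℝ) < δ := by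
      rw [Prod.dist_eq]
      simp only [dist_self]
      rw [max_eq_right dist_nonneg]
      exact hud
    have := hucd _ hmemu _ hmemu0 hdq
    simp only [BoundedContinuousFunction.coe_sub, Pi.sub_apply]
    rw [hf u p, hf u0 p, ← Complex.ofReal_sub, Complex.norm_real, Real.norm_eq_abs]
    rw [Real.dist_eq] at this
    exact this.le
  have := integ_norm_le_of_forall_mem hS κ z hz (f u - f u0) (ε * z.im / 2)
    (by positivity) hbnd
  calc ‖κ.integ z (f u - f u0)‖ ≤ ε * z.im / 2 / z.im := this
    _ = ε / 2 := by field_simp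
    _ < ε := by linarith
lemma denom_est {K M : ℝ} (hK : 0 ≤ K) (hM : 0 ≤ M)
    {z : ℂ} (hre : |z.re| ≤ z.im) (hy : 64 * (1 + K) * (1 + M) < z.im)
    {l : ℝ} (hl : |l| ≤ M) {w v : ℂ} (hw : ‖w‖ ≤ K / z.im) (hv : ‖v‖ ≤ K / z.im) :
    z.im / 2 ≤ ‖-z * (1 + w) + (l : ℂ) / (1 + v)‖ := by
  set y := z.im with hydef
  have hy0 : 0 < y := by nlinarith
  have hKy : K / y ≤ 1 / 2 := by
    rw [div_le_div_iff₀ hy0 (by norm_num)]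
    nlinarith
  have hv2 : (1:ℝ) / 2 ≤ ‖1 + v‖ := by
    have h1 : ‖(1:ℂ)‖ ≤ ‖1 + v‖ + ‖v‖ := by
      calc ‖(1:ℂ)‖ = ‖(1 + v) + (-v)‖ := by ring_nf
        _ ≤ ‖1 + v‖ + ‖-v‖ := norm_add_le _ _
        _ = ‖1 + v‖ + ‖v‖ := by rw [norm_neg]
    rw [norm_one] at h1
    linarith
  have hzabs : ‖z‖ ≤ 2 * y := by
    have := Complex.norm_le_abs_re_add_abs_im z
    have : ‖z‖ ≤ |z.re| + |z.im| := this
    rw [abs_of_pos hy0] at this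
    linarith
  -- imaginary part bounds
  have him1 : |(-z * w).im| ≤ 2 * K := by
    calc |(-z * w).im| ≤ ‖-z * w‖ := Complex.abs_im_le_norm _
      _ = ‖z‖ * ‖w‖ := by rw [norm_mul, norm_neg]
      _ ≤ (2 * y) * (K / y) := by
          apply mul_le_mul hzabs hw (norm_nonneg _) (by positivity)
      _ = 2 * K := by field_simp
  have him2 : |((l : ℂ) / (1 + v)).im| ≤ 2 * M * K / y := by
    have hlv : ((l : ℂ) / (1 + v)).im = ((l : ℂ) / (1 + v) - (l : ℂ)).im := by
      simp [Complex.sub_im, Complex.ofReal_im]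
    rw [hlv]
    have hv0 : (1 + v) ≠ 0 := by
      intro hcon
      rw [hcon, norm_zero] at hv2
      linarith
    calc |((l : ℂ) / (1 + v) - (l : ℂ)).im| ≤ ‖(l : ℂ) / (1 + v) - (l : ℂ)‖ :=
          Complex.abs_im_le_norm _
      _ = ‖(l : ℂ) * v‖ / ‖1 + v‖ := by
          rw [← norm_neg ((l:ℂ) * v), ← norm_div]
          congr 1
          field_simp
          ring
      _ ≤ (M * (K / y)) / (1 / 2) := by
          apply div_le_div₀ (by positivity) ?_ (by norm_num) hv2
          rw [norm_mul, Complex.norm_real, Real.norm_eq_abs]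
          exact mul_le_mul hl hv (norm_nonneg _) hM
      _ = 2 * M * K / y := by field_simp
  have himD : (-z * (1 + w) + (l : ℂ) / (1 + v)).im ≤ -(y / 2) := by
    have hD : (-z * (1 + w) + (l : ℂ) / (1 + v)).im
        = -y + (-z * w).im + ((l : ℂ) / (1 + v)).im := by
      have : -z * (1 + w) = -z + (-z * w) := by ring
      rw [Complex.add_im, this, Complex.add_im, Complex.neg_im]
    rw [hD]
    have h2K : 2 * K ≤ y / 4 := by nlinarith
    have hMKy : 2 * M * K / y ≤ y / 4 := by
      rw [div_le_iff₀ hy0]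
      nlinarith
    have := abs_le.mp him1
    have := abs_le.mp him2
    linarith [(abs_le.mp him1).2, (abs_le.mp him2).2]
  calc y / 2 = -(-(y/2)) := by ring
    _ ≤ -((-z * (1 + w) + (l : ℂ) / (1 + v)).im) := by linarith
    _ ≤ |(-z * (1 + w) + (l : ℂ) / (1 + v)).im| := neg_le_abs _
    _ ≤ ‖-z * (1 + w) + (l : ℂ) / (1 + v)‖ := Complex.abs_im_le_norm _

lemma denom_diff {K M : ℝ} (hK : 0 ≤ K) (hM : 0 ≤ M)
    {z : ℂ} (hre : |z.re| ≤ z.im) (hy : 64 * (1 + K) * (1 + M) < z.im)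
    {l : ℝ} (hl : |l| ≤ M) {w v w' v' : ℂ}
    (hw : ‖w‖ ≤ K / z.im) (hv : ‖v‖ ≤ K / z.im)
    (hw' : ‖w'‖ ≤ K / z.im) (hv' : ‖v'‖ ≤ K / z.im) :
    ‖(-z * (1 + w) + (l : ℂ) / (1 + v))⁻¹ - (-z * (1 + w') + (l : ℂ) / (1 + v'))⁻¹‖
      ≤ (2 * z.im * ‖w - w'‖ + 4 * M * ‖v - v'‖) * (4 / z.im ^ 2) := by
  set y := z.im with hydef
  have hy0 : 0 < y := by nlinarith
  have hD := denom_est hK hM hre hy hl hw hv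
  have hD' := denom_est hK hM hre hy hl hw' hv'
  set D := -z * (1 + w) + (l : ℂ) / (1 + v) with hDdef
  set D' := -z * (1 + w') + (l : ℂ) / (1 + v') with hD'def
  have hD0 : D ≠ 0 := by intro hcon; rw [hcon, norm_zero] at hD; linarith
  have hD'0 : D' ≠ 0 := by intro hcon; rw [hcon, norm_zero] at hD'; linarith
  have hv20 : (1 + v) ≠ 0 := by
    intro hcon
    have hKy : K / y ≤ 1 / 2 := by rw [div_le_div_iff₀ hy0 (by norm_num)]; nlinarith
    have : ‖(1:ℂ)‖ ≤ ‖1 + v‖ + ‖v‖ := by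
      calc ‖(1:ℂ)‖ = ‖(1 + v) + (-v)‖ := by ring_nf
        _ ≤ ‖1 + v‖ + ‖-v‖ := norm_add_le _ _
        _ = ‖1 + v‖ + ‖v‖ := by rw [norm_neg]
    rw [hcon, norm_zero, norm_one] at this
    linarith
  have hKy : K / y ≤ 1 / 2 := by
    rw [div_le_div_iff₀ hy0 (by norm_num)]; nlinarith
  have hone : ∀ u : ℂ, ‖u‖ ≤ K / y → (1:ℝ)/2 ≤ ‖1 + u‖ := by
    intro u hu
    have h1 : ‖(1:ℂ)‖ ≤ ‖1 + u‖ + ‖u‖ := by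
      calc ‖(1:ℂ)‖ = ‖(1 + u) + (-u)‖ := by ring_nf
        _ ≤ ‖1 + u‖ + ‖-u‖ := norm_add_le _ _
        _ = ‖1 + u‖ + ‖u‖ := by rw [norm_neg]
    rw [norm_one] at h1
    linarith
  have hv2 := hone v hv
  have hv2' := hone v' hv'
  have hv'0 : (1 + v') ≠ 0 := by
    intro hcon; rw [hcon, norm_zero] at hv2'; linarith
  have hzabs : ‖z‖ ≤ 2 * y := by
    have h2 : ‖z‖ ≤ |z.re| + |z.im| := Complex.norm_le_abs_re_add_abs_im z
    rw [abs_of_pos hy0] at h2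
    linarith
  have hnum : ‖D' - D‖ ≤ 2 * y * ‖w - w'‖ + 4 * M * ‖v - v'‖ := by
    have hsplit : D' - D = -z * (w' - w) + ((l : ℂ) * (v - v')) / ((1 + v') * (1 + v)) := by
      rw [hDdef, hD'def]
      field_simp
      ring
    rw [hsplit]
    have h1 : ‖-z * (w' - w)‖ ≤ 2 * y * ‖w - w'‖ := by
      rw [norm_mul, norm_neg, norm_sub_rev]
      exact mul_le_mul_of_nonneg_right hzabs (norm_nonneg _) |>.trans_eq' rfl
    have h2 : ‖((l : ℂ) * (v - v')) / ((1 + v') * (1 + v))‖ ≤ 4 * M * ‖v - v'‖ := by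
      rw [norm_div, norm_mul, norm_mul, Complex.norm_real, Real.norm_eq_abs]
      have hden : (1:ℝ)/4 ≤ ‖1 + v'‖ * ‖1 + v‖ := by nlinarith
      have hnum' : |l| * ‖v - v'‖ ≤ M * ‖v - v'‖ :=
        mul_le_mul_of_nonneg_right hl (norm_nonneg _)
      calc |l| * ‖v - v'‖ / (‖1 + v'‖ * ‖1 + v‖) ≤ (M * ‖v - v'‖) / (1/4) := by
            apply div_le_div₀ (by positivity) hnum' (by norm_num) hden
        _ = 4 * M * ‖v - v'‖ := by ring
    calc ‖-z * (w' - w) + ((l : ℂ) * (v - v')) / ((1 + v') * (1 + v))‖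
        ≤ ‖-z * (w' - w)‖ + ‖((l : ℂ) * (v - v')) / ((1 + v') * (1 + v))‖ := norm_add_le _ _
      _ ≤ 2 * y * ‖w - w'‖ + 4 * M * ‖v - v'‖ := add_le_add h1 h2
  rw [inv_sub_inv hD0 hD'0, norm_div, norm_mul]
  have hDD : y/2 * (y/2) ≤ ‖D‖ * ‖D'‖ := by nlinarith
  calc ‖D' - D‖ / (‖D‖ * ‖D'‖) ≤ (2 * y * ‖w - w'‖ + 4 * M * ‖v - v'‖) / (y/2 * (y/2)) := by
        apply div_le_div₀ (by positivity) hnum (by positivity) hDD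
    _ = (2 * y * ‖w - w'‖ + 4 * M * ‖v - v'‖) * (4 / y ^ 2) := by
        field_simp
        ring
lemma integral_diff_bound {H : Measure (ℝ × ℝ)} [IsProbabilityMeasure H]
    {ℋ : Set (ℝ × ℝ)} (hℋ : IsCompact ℋ) (hHsupp : H ℋᶜ = 0)
    {f1 f2 : ℝ × ℝ → ℂ} (h1c : ContinuousOn f1 ℋ) (h2c : ContinuousOn f2 ℋ)
    {C1 C : ℝ}
    (hb1 : ∀ p ∈ ℋ, ‖f1 p‖ ≤ C1) (hb2 : ∀ p ∈ ℋ, ‖f2 p‖ ≤ C1)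
    (hdiff : ∀ p ∈ ℋ, ‖f1 p - f2 p‖ ≤ C) :
    ‖(∫ p, f1 p ∂H) - ∫ p, f2 p ∂H‖ ≤ C := by
  have hmeas : MeasurableSet ℋ := hℋ.isClosed.measurableSet
  have hae : ∀ᵐ p ∂H, p ∈ ℋ := by
    rw [ae_iff]
    have : {p : ℝ × ℝ | ¬ p ∈ ℋ} = ℋᶜ := rfl
    rw [this]; exact hHsupp
  have hsm1 : AEStronglyMeasurable f1 H := by
    have := h1c.aestronglyMeasurable (μ := H) hmeas
    rwa [Measure.restrict_eq_self_of_ae_mem hae] at this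
  have hsm2 : AEStronglyMeasurable f2 H := by
    have := h2c.aestronglyMeasurable (μ := H) hmeas
    rwa [Measure.restrict_eq_self_of_ae_mem hae] at this
  have hint1 : Integrable f1 H :=
    Integrable.mono' (integrable_const C1) hsm1 (hae.mono fun p hp => hb1 p hp)
  have hint2 : Integrable f2 H :=
    Integrable.mono' (integrable_const C1) hsm2 (hae.mono fun p hp => hb2 p hp)
  rw [← integral_sub hint1 hint2]
  calc ‖∫ p, (f1 p - f2 p) ∂H‖ ≤ C * (H Set.univ).toReal :=
        norm_integral_le_of_norm_le_const (hae.mono fun p hp => hdiff p hp)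
    _ = C := by simp [measure_univ]

lemma interval_diff_bound {c : ℝ} (hc0 : 0 ≤ c) (hc1 : c ≤ 1)
    {f1 f2 : ℝ → ℂ} (h1c : Continuous f1) (h2c : Continuous f2)
    {C : ℝ} (hdiff : ∀ u ∈ Set.Icc c 1, ‖f1 u - f2 u‖ ≤ C) :
    ‖(∫ u in c..(1:ℝ), f1 u) - ∫ u in c..(1:ℝ), f2 u‖ ≤ C := by
  have hC : 0 ≤ C := le_trans (norm_nonneg _) (hdiff c ⟨le_refl _, hc1⟩)
  rw [← intervalIntegral.integral_sub (h1c.intervalIntegrable _ _) (h2c.intervalIntegrable _ _)]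
  calc ‖∫ u in c..(1:ℝ), (f1 u - f2 u)‖ ≤ C * |1 - c| := by
        apply intervalIntegral.norm_integral_le_of_norm_le_const
        intro u hu
        rw [Set.uIoc_of_le hc1] at hu
        exact hdiff u ⟨hu.1.le, hu.2⟩
    _ ≤ C * 1 := by
        have h : |1 - c| ≤ 1 := by rw [_root_.abs_of_nonneg (sub_nonneg.mpr hc1)]; linarith
        exact mul_le_mul_of_nonneg_left h hC
    _ = C := mul_one C
lemma combo_bound {cc : ℂ} (hcc : ‖cc‖ ≤ 1) (h1c : ‖1 - cc‖ ≤ 1) {I1 I2 J1 J2 : ℂ}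
    {C1 C2 : ℝ} (hI : ‖I1 - I2‖ ≤ C1) (hJ : ‖J1 - J2‖ ≤ C2) :
    ‖(cc * I1 + (1 - cc) * J1) - (cc * I2 + (1 - cc) * J2)‖ ≤ C1 + C2 := by
  calc ‖(cc * I1 + (1 - cc) * J1) - (cc * I2 + (1 - cc) * J2)‖
      = ‖cc * (I1 - I2) + (1 - cc) * (J1 - J2)‖ := by congr 1; ring
    _ ≤ ‖cc * (I1 - I2)‖ + ‖(1 - cc) * (J1 - J2)‖ := norm_add_le _ _
    _ = ‖cc‖ * ‖I1 - I2‖ + ‖1 - cc‖ * ‖J1 - J2‖ := by rw [norm_mul, norm_mul]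
    _ ≤ 1 * C1 + 1 * C2 := add_le_add
        (mul_le_mul hcc hI (norm_nonneg _) zero_le_one)
        (mul_le_mul h1c hJ (norm_nonneg _) zero_le_one)
    _ = C1 + C2 := by ring

set_option maxHeartbeats 1000000 in
/-- Uniqueness of the solution of the coupled system (1)–(2) for `z` in the cone
`|Re z| ≤ Im z` with `Im z` sufficiently large: any two pairs of Stieltjes kernels
(supported in `ℋ` and `ℋ̃` respectively) solving the system coincide. -/
theorem stmt_12 (σ2 : ℝ → ℝ → ℝ) (σmax2 : ℝ)
    (hσc : Continuous fun p : ℝ × ℝ => σ2 p.1 p.2)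
    (hσb : ∀ x y, 0 ≤ σ2 x y ∧ σ2 x y ≤ σmax2)
    (c : ℝ) (hc : 0 < c) (hc1 : c ≤ 1)
    (H : Measure (ℝ × ℝ)) [IsProbabilityMeasure H]
    (ℋ : Set (ℝ × ℝ)) (hℋ : IsCompact ℋ) (hℋs : ℋ ⊆ Set.Icc 0 1 ×ˢ Set.univ)
    (hHsupp : H ℋᶜ = 0)
    (ℋt : Set (ℝ × ℝ))
    (hℋt : ℋt = ((fun p : ℝ × ℝ => (c * p.1, p.2)) '' ℋ) ∪ Set.Icc c 1 ×ˢ {0})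
    (sL sA : ℝ → BoundedContinuousFunction (ℝ × ℝ) ℂ)
    (hsL : ∀ u p, sL u p = (σ2 u p.1 : ℂ))
    (hsA : ∀ u p, sA u p = (σ2 p.1 u : ℂ)) :
    ∃ T : ℝ, 0 < T ∧ ∀ z : ℂ, |z.re| ≤ z.im → T < z.im →
      ∀ (π ρ : StieltjesKernelOn ℋ) (πt ρt : StieltjesKernelOn ℋt),
        SolvesSystem c H π πt sL sA z → SolvesSystem c H ρ ρt sL sA z →
          ∀ g : BoundedContinuousFunction (ℝ × ℝ) ℂ,
            π.integ z g = ρ.integ z g ∧ πt.integ z g = ρt.integ z g := by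
  have hK0 : 0 ≤ σmax2 := le_trans (hσb 0 0).1 (hσb 0 0).2
  obtain ⟨M, hM0, hMb⟩ : ∃ M : ℝ, 0 ≤ M ∧ ∀ p ∈ ℋ, |p.2| ≤ M := by
    obtain ⟨C, hC⟩ := (hℋ.image continuous_snd).isBounded.exists_norm_le
    refine ⟨max C 0, le_max_right _ _, fun p hp => ?_⟩
    have := hC p.2 (Set.mem_image_of_mem _ hp)
    rw [Real.norm_eq_abs] at this
    exact this.trans (le_max_left _ _)
  refine ⟨64 * (1 + σmax2) * (1 + M), by nlinarith, ?_⟩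
  intro z hre hzT π ρ πt ρt hπ hρ
  have hy0 : 0 < z.im := by nlinarith
  have hℋtc : IsCompact ℋt := by
    rw [hℋt]
    exact (hℋ.image ((continuous_const.mul continuous_fst).prodMk continuous_snd)).union
      (isCompact_Icc.prod isCompact_singleton)
  have hℋts : ℋt ⊆ Set.Icc (0:ℝ) 1 ×ˢ Set.univ := by
    rw [hℋt]
    rintro q (⟨p, hp, rfl⟩ | ⟨hq1, _⟩)
    · have h1 := (hℋs hp).1
      rw [Set.mem_Icc] at h1
      refine ⟨Set.mem_Icc.mpr ⟨?_, ?_⟩, trivial⟩ <;> dsimp only <;> nlinarith [h1.1, h1.2]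
    · exact ⟨Set.mem_Icc.mpr ⟨by linarith [hq1.1], hq1.2⟩, trivial⟩
  -- norms of the test functions
  have hsAn : ∀ u, ‖sA u‖ ≤ σmax2 := by
    intro u
    refine (BoundedContinuousFunction.norm_le hK0).mpr fun p => ?_
    rw [hsA u p, Complex.norm_real, Real.norm_eq_abs, _root_.abs_of_nonneg (hσb p.1 u).1]
    exact (hσb p.1 u).2
  have hsLn : ∀ u, ‖sL u‖ ≤ σmax2 := by
    intro u
    refine (BoundedContinuousFunction.norm_le hK0).mpr fun p => ?_
    rw [hsL u p, Complex.norm_real, Real.norm_eq_abs, _root_.abs_of_nonneg (hσb u p.1).1]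
    exact (hσb u p.1).2
  have hcC : ‖(c:ℂ)‖ ≤ 1 := by
    rw [Complex.norm_real, Real.norm_eq_abs, _root_.abs_of_pos hc]; exact hc1
  -- pointwise bounds on kernel values
  have hXb : ∀ (κ : StieltjesKernelOn ℋ) u, ‖κ.integ z (sA u)‖ ≤ σmax2 / z.im :=
    fun κ u => (κ.norm_le z hy0 _).trans (by gcongr; exact hsAn u)
  have hYb : ∀ (κ : StieltjesKernelOn ℋt) u, ‖κ.integ z (sL u)‖ ≤ σmax2 / z.im :=
    fun κ u => (κ.norm_le z hy0 _).trans (by gcongr; exact hsLn u)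
  have hXb' : ∀ (κ : StieltjesKernelOn ℋ) u, ‖(c:ℂ) * κ.integ z (sA u)‖ ≤ σmax2 / z.im := by
    intro κ u
    rw [norm_mul]
    calc ‖(c:ℂ)‖ * ‖κ.integ z (sA u)‖ ≤ 1 * (σmax2 / z.im) :=
          mul_le_mul hcC (hXb κ u) (norm_nonneg _) zero_le_one
      _ = σmax2 / z.im := one_mul _
  have hone_ne : ∀ t : ℂ, ‖t‖ ≤ σmax2 / z.im → 1 + t ≠ 0 := by
    intro t ht hcon
    have hKy : σmax2 / z.im ≤ 1/2 := by
      rw [div_le_div_iff₀ hy0 (by norm_num)]; nlinarith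
    have h1 : ‖(1:ℂ)‖ ≤ ‖1 + t‖ + ‖t‖ := by
      calc ‖(1:ℂ)‖ = ‖(1 + t) + (-t)‖ := by ring_nf
        _ ≤ ‖1 + t‖ + ‖-t‖ := norm_add_le _ _
        _ = ‖1 + t‖ + ‖t‖ := by rw [norm_neg]
    rw [hcon, norm_zero, norm_one] at h1
    linarith
  -- continuity of parametrized kernel evaluations
  have hcont : ∀ (κ : StieltjesKernelOn ℋ), Continuous fun u => κ.integ z (sA u) :=
    fun κ => continuous_integ_param hℋ hℋs κ z hy0 σ2 hσc sA hsA
  have hcontt : ∀ (κ : StieltjesKernelOn ℋt), Continuous fun u => κ.integ z (sL u) :=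
    fun κ => continuous_integ_param hℋtc hℋts κ z hy0 (fun t u => σ2 u t)
      (hσc.comp continuous_swap) sL (fun u p => hsL u p)
  -- the two sup quantities
  set a := sSup ((fun u => ‖π.integ z (sA u) - ρ.integ z (sA u)‖) '' Set.Icc (0:ℝ) 1) with hadef
  set b := sSup ((fun u => ‖πt.integ z (sL u) - ρt.integ z (sL u)‖) '' Set.Icc (0:ℝ) 1) with hbdef
  have hAbdd : BddAbove ((fun u => ‖π.integ z (sA u) - ρ.integ z (sA u)‖) '' Set.Icc (0:ℝ) 1) := by
    refine ⟨2 * σmax2 / z.im, ?_⟩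
    rintro r ⟨u, hu, rfl⟩
    calc ‖π.integ z (sA u) - ρ.integ z (sA u)‖
        ≤ ‖π.integ z (sA u)‖ + ‖ρ.integ z (sA u)‖ := norm_sub_le _ _
      _ ≤ σmax2 / z.im + σmax2 / z.im := add_le_add (hXb π u) (hXb ρ u)
      _ = 2 * σmax2 / z.im := by ring
  have hBbdd : BddAbove ((fun u => ‖πt.integ z (sL u) - ρt.integ z (sL u)‖) '' Set.Icc (0:ℝ) 1) := by
    refine ⟨2 * σmax2 / z.im, ?_⟩
    rintro r ⟨u, hu, rfl⟩
    calc ‖πt.integ z (sL u) - ρt.integ z (sL u)‖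
        ≤ ‖πt.integ z (sL u)‖ + ‖ρt.integ z (sL u)‖ := norm_sub_le _ _
      _ ≤ σmax2 / z.im + σmax2 / z.im := add_le_add (hYb πt u) (hYb ρt u)
      _ = 2 * σmax2 / z.im := by ring
  have hAne : ((fun u => ‖π.integ z (sA u) - ρ.integ z (sA u)‖) '' Set.Icc (0:ℝ) 1).Nonempty :=
    ⟨_, ⟨0, ⟨le_refl 0, zero_le_one⟩, rfl⟩⟩
  have hBne : ((fun u => ‖πt.integ z (sL u) - ρt.integ z (sL u)‖) '' Set.Icc (0:ℝ) 1).Nonempty :=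
    ⟨_, ⟨0, ⟨le_refl 0, zero_le_one⟩, rfl⟩⟩
  have haub : ∀ u, 0 ≤ u → u ≤ 1 → ‖π.integ z (sA u) - ρ.integ z (sA u)‖ ≤ a :=
    fun u h0 h1 => le_csSup hAbdd ⟨u, ⟨h0, h1⟩, rfl⟩
  have hbub : ∀ u, 0 ≤ u → u ≤ 1 → ‖πt.integ z (sL u) - ρt.integ z (sL u)‖ ≤ b :=
    fun u h0 h1 => le_csSup hBbdd ⟨u, ⟨h0, h1⟩, rfl⟩
  have ha0 : 0 ≤ a := le_trans (norm_nonneg _) (haub 0 le_rfl zero_le_one)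
  have hb0 : 0 ≤ b := le_trans (norm_nonneg _) (hbub 0 le_rfl zero_le_one)
  have hvva : ∀ u, 0 ≤ u → u ≤ 1 →
      ‖(c:ℂ) * π.integ z (sA u) - (c:ℂ) * ρ.integ z (sA u)‖ ≤ a := by
    intro u h0 h1
    rw [← mul_sub, norm_mul]
    calc ‖(c:ℂ)‖ * ‖π.integ z (sA u) - ρ.integ z (sA u)‖ ≤ 1 * a :=
          mul_le_mul hcC (haub u h0 h1) (norm_nonneg _) zero_le_one
      _ = a := one_mul a
  -- key estimate 1
  have hkey1 : ∀ g : BoundedContinuousFunction (ℝ × ℝ) ℂ,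
      ‖π.integ z g - ρ.integ z g‖ ≤ ‖g‖ * ((2*z.im*b + 4*M*a) * (4/z.im^2)) := by
    intro g
    rw [(hπ.1) g, (hρ.1) g]
    have hDπc : Continuous fun p : ℝ × ℝ => -z * (1 + πt.integ z (sL p.1))
        + (p.2:ℂ) / (1 + (c:ℂ) * π.integ z (sA (c * p.1))) := by
      apply Continuous.add
      · exact continuous_const.mul (continuous_const.add ((hcontt πt).comp continuous_fst))
      · exact (Complex.continuous_ofReal.comp continuous_snd).div
          (continuous_const.add (continuous_const.mul
            ((hcont π).comp (continuous_const.mul continuous_fst))))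
          (fun p => hone_ne _ (hXb' π _))
    have hDρc : Continuous fun p : ℝ × ℝ => -z * (1 + ρt.integ z (sL p.1))
        + (p.2:ℂ) / (1 + (c:ℂ) * ρ.integ z (sA (c * p.1))) := by
      apply Continuous.add
      · exact continuous_const.mul (continuous_const.add ((hcontt ρt).comp continuous_fst))
      · exact (Complex.continuous_ofReal.comp continuous_snd).div
          (continuous_const.add (continuous_const.mul
            ((hcont ρ).comp (continuous_const.mul continuous_fst))))
          (fun p => hone_ne _ (hXb' ρ _))
    have hDπlow : ∀ p ∈ ℋ, z.im/2 ≤ ‖-z * (1 + πt.integ z (sL p.1))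
        + (p.2:ℂ) / (1 + (c:ℂ) * π.integ z (sA (c * p.1)))‖ :=
      fun p hp => denom_est hK0 hM0 hre hzT (hMb p hp) (hYb πt _) (hXb' π _)
    have hDρlow : ∀ p ∈ ℋ, z.im/2 ≤ ‖-z * (1 + ρt.integ z (sL p.1))
        + (p.2:ℂ) / (1 + (c:ℂ) * ρ.integ z (sA (c * p.1)))‖ :=
      fun p hp => denom_est hK0 hM0 hre hzT (hMb p hp) (hYb ρt _) (hXb' ρ _)
    have hne_of_low : ∀ w : ℂ, z.im/2 ≤ ‖w‖ → w ≠ 0 := by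
      intro w hw hcon; rw [hcon, norm_zero] at hw; linarith
    refine integral_diff_bound (C1 := ‖g‖ / (z.im/2)) hℋ hHsupp ?_ ?_ ?_ ?_ ?_
    · exact (g.continuous.continuousOn).div hDπc.continuousOn
        (fun p hp => hne_of_low _ (hDπlow p hp))
    · exact (g.continuous.continuousOn).div hDρc.continuousOn
        (fun p hp => hne_of_low _ (hDρlow p hp))
    · intro p hp
      rw [norm_div]
      exact div_le_div₀ (norm_nonneg g) (g.norm_coe_le_norm p) (by linarith) (hDπlow p hp)
    · intro p hp
      rw [norm_div]
      exact div_le_div₀ (norm_nonneg g) (g.norm_coe_le_norm p) (by linarith) (hDρlow p hp)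
    · intro p hp
      have hp1 := (hℋs hp).1
      rw [Set.mem_Icc] at hp1
      have hgen : ∀ (x d1 d2 : ℂ), x / d1 - x / d2 = x * (d1⁻¹ - d2⁻¹) := by
        intro x d1 d2; rw [mul_sub, div_eq_mul_inv, div_eq_mul_inv]
      rw [hgen, norm_mul]
      have hd := denom_diff hK0 hM0 hre hzT (hMb p hp)
        (hYb πt p.1) (hXb' π (c*p.1)) (hYb ρt p.1) (hXb' ρ (c*p.1))
      calc ‖g p‖ * ‖(-z * (1 + πt.integ z (sL p.1))
              + (p.2:ℂ) / (1 + (c:ℂ) * π.integ z (sA (c * p.1))))⁻¹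
            - (-z * (1 + ρt.integ z (sL p.1))
              + (p.2:ℂ) / (1 + (c:ℂ) * ρ.integ z (sA (c * p.1))))⁻¹‖
          ≤ ‖g‖ * ((2*z.im*‖πt.integ z (sL p.1) - ρt.integ z (sL p.1)‖
              + 4*M*‖(c:ℂ) * π.integ z (sA (c*p.1)) - (c:ℂ) * ρ.integ z (sA (c*p.1))‖)
                * (4/z.im^2)) := by
            apply mul_le_mul (g.norm_coe_le_norm p) hd (norm_nonneg _) (norm_nonneg _)
        _ ≤ ‖g‖ * ((2*z.im*b + 4*M*a) * (4/z.im^2)) := by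
            gcongr
            · exact hbub p.1 hp1.1 hp1.2
            · exact hvva (c*p.1) (by nlinarith [hp1.1]) (by nlinarith [hp1.1, hp1.2])
  -- key estimate 2
  have hkey2 : ∀ g : BoundedContinuousFunction (ℝ × ℝ) ℂ,
      ‖πt.integ z g - ρt.integ z g‖ ≤ ‖g‖ * ((2*z.im*a + 4*M*b) * (4/z.im^2))
        + ‖g‖ * ((2*z.im*a) * (4/z.im^2)) := by
    intro g
    rw [(hπ.2) g, (hρ.2) g]
    have hgen : ∀ (x d1 d2 : ℂ), x / d1 - x / d2 = x * (d1⁻¹ - d2⁻¹) := by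
      intro x d1 d2; rw [mul_sub, div_eq_mul_inv, div_eq_mul_inv]
    have hne_of_low : ∀ w : ℂ, z.im/2 ≤ ‖w‖ → w ≠ 0 := by
      intro w hw hcon; rw [hcon, norm_zero] at hw; linarith
    have h1mc : ‖1 - (c:ℂ)‖ ≤ 1 := by
      have he : (1 - (c:ℂ)) = ((1 - c : ℝ) : ℂ) := by push_cast; ring
      rw [he, Complex.norm_real, Real.norm_eq_abs, _root_.abs_of_nonneg (by linarith)]
      linarith
    have hI : ‖(∫ p : ℝ × ℝ, g (c * p.1, p.2) / (-z * (1 + ↑c * π.integ z (sA (c * p.1)))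
            + (p.2 : ℂ) / (1 + πt.integ z (sL p.1))) ∂H)
        - ∫ p : ℝ × ℝ, g (c * p.1, p.2) / (-z * (1 + ↑c * ρ.integ z (sA (c * p.1)))
            + (p.2 : ℂ) / (1 + ρt.integ z (sL p.1))) ∂H‖
        ≤ ‖g‖ * ((2*z.im*a + 4*M*b) * (4/z.im^2)) := by
      have hDπlow : ∀ p ∈ ℋ, z.im/2 ≤ ‖-z * (1 + (c:ℂ) * π.integ z (sA (c * p.1)))
          + (p.2:ℂ) / (1 + πt.integ z (sL p.1))‖ :=
        fun p hp => denom_est hK0 hM0 hre hzT (hMb p hp) (hXb' π _) (hYb πt _)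
      have hDρlow : ∀ p ∈ ℋ, z.im/2 ≤ ‖-z * (1 + (c:ℂ) * ρ.integ z (sA (c * p.1)))
          + (p.2:ℂ) / (1 + ρt.integ z (sL p.1))‖ :=
        fun p hp => denom_est hK0 hM0 hre hzT (hMb p hp) (hXb' ρ _) (hYb ρt _)
      have hDπc : Continuous fun p : ℝ × ℝ => -z * (1 + (c:ℂ) * π.integ z (sA (c * p.1)))
          + (p.2:ℂ) / (1 + πt.integ z (sL p.1)) := by
        apply Continuous.add
        · exact continuous_const.mul (continuous_const.add (continuous_const.mul
            ((hcont π).comp (continuous_const.mul continuous_fst))))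
        · exact (Complex.continuous_ofReal.comp continuous_snd).div
            (continuous_const.add ((hcontt πt).comp continuous_fst))
            (fun p => hone_ne _ (hYb πt _))
      have hDρc : Continuous fun p : ℝ × ℝ => -z * (1 + (c:ℂ) * ρ.integ z (sA (c * p.1)))
          + (p.2:ℂ) / (1 + ρt.integ z (sL p.1)) := by
        apply Continuous.add
        · exact continuous_const.mul (continuous_const.add (continuous_const.mul
            ((hcont ρ).comp (continuous_const.mul continuous_fst))))
        · exact (Complex.continuous_ofReal.comp continuous_snd).div
            (continuous_const.add ((hcontt ρt).comp continuous_fst))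
            (fun p => hone_ne _ (hYb ρt _))
      have hnum : Continuous fun p : ℝ × ℝ => g (c * p.1, p.2) :=
        g.continuous.comp ((continuous_const.mul continuous_fst).prodMk continuous_snd)
      refine integral_diff_bound (C1 := ‖g‖ / (z.im/2)) hℋ hHsupp ?_ ?_ ?_ ?_ ?_
      · exact hnum.continuousOn.div hDπc.continuousOn (fun p hp => hne_of_low _ (hDπlow p hp))
      · exact hnum.continuousOn.div hDρc.continuousOn (fun p hp => hne_of_low _ (hDρlow p hp))
      · intro p hp
        rw [norm_div]
        exact div_le_div₀ (norm_nonneg g) (g.norm_coe_le_norm _) (by linarith) (hDπlow p hp)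
      · intro p hp
        rw [norm_div]
        exact div_le_div₀ (norm_nonneg g) (g.norm_coe_le_norm _) (by linarith) (hDρlow p hp)
      · intro p hp
        have hp1 := (hℋs hp).1
        rw [Set.mem_Icc] at hp1
        rw [hgen, norm_mul]
        have hd := denom_diff hK0 hM0 hre hzT (hMb p hp)
          (hXb' π (c*p.1)) (hYb πt p.1) (hXb' ρ (c*p.1)) (hYb ρt p.1)
        calc ‖g (c * p.1, p.2)‖ * ‖(-z * (1 + (c:ℂ) * π.integ z (sA (c * p.1)))
                + (p.2:ℂ) / (1 + πt.integ z (sL p.1)))⁻¹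
              - (-z * (1 + (c:ℂ) * ρ.integ z (sA (c * p.1)))
                + (p.2:ℂ) / (1 + ρt.integ z (sL p.1)))⁻¹‖
            ≤ ‖g‖ * ((2*z.im*‖(c:ℂ) * π.integ z (sA (c*p.1)) - (c:ℂ) * ρ.integ z (sA (c*p.1))‖
                + 4*M*‖πt.integ z (sL p.1) - ρt.integ z (sL p.1)‖) * (4/z.im^2)) :=
              mul_le_mul (g.norm_coe_le_norm _) hd (norm_nonneg _) (norm_nonneg _)
          _ ≤ ‖g‖ * ((2*z.im*a + 4*M*b) * (4/z.im^2)) := by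
              gcongr
              · exact hvva (c*p.1) (by nlinarith [hp1.1]) (by nlinarith [hp1.1, hp1.2])
              · exact hbub p.1 hp1.1 hp1.2
    have hJ : ‖(∫ u in c..(1:ℝ), g (u, 0) / (-z * (1 + ↑c * π.integ z (sA u))))
        - ∫ u in c..(1:ℝ), g (u, 0) / (-z * (1 + ↑c * ρ.integ z (sA u)))‖
        ≤ ‖g‖ * ((2*z.im*a) * (4/z.im^2)) := by
      have hnum : Continuous fun u : ℝ => g (u, 0) :=
        g.continuous.comp (continuous_id.prodMk continuous_const)
      have hzne : -z ≠ 0 := by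
        intro hcon
        have hz : z = 0 := by
          have := neg_eq_zero.mp hcon
          exact this
        rw [hz] at hy0
        simp at hy0
      have hdne : ∀ (κ : StieltjesKernelOn ℋ) u, -z * (1 + (c:ℂ) * κ.integ z (sA u)) ≠ 0 :=
        fun κ u => mul_ne_zero hzne (hone_ne _ (hXb' κ u))
      have hc1' : Continuous fun u : ℝ => g (u,0) / (-z * (1 + (c:ℂ) * π.integ z (sA u))) :=
        hnum.div (continuous_const.mul (continuous_const.add
          (continuous_const.mul (hcont π)))) (hdne π)
      have hc2' : Continuous fun u : ℝ => g (u,0) / (-z * (1 + (c:ℂ) * ρ.integ z (sA u))) :=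
        hnum.div (continuous_const.mul (continuous_const.add
          (continuous_const.mul (hcont ρ)))) (hdne ρ)
      apply interval_diff_bound hc.le hc1 hc1' hc2'
      intro u hu
      rw [hgen, norm_mul]
      have hshape : ∀ (κ : StieltjesKernelOn ℋ), -z * (1 + (c:ℂ) * κ.integ z (sA u))
          = -z * (1 + (c:ℂ) * κ.integ z (sA u)) + (((0:ℝ):ℂ)) / (1 + 0) := by
        intro κ; simp
      rw [hshape π, hshape ρ]
      have hzero : ‖(0:ℂ)‖ ≤ σmax2 / z.im := by
        rw [norm_zero]; positivity
      have hd := denom_diff hK0 hM0 hre hzT (show |(0:ℝ)| ≤ M by simpa using hM0)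
        (hXb' π u) hzero (hXb' ρ u) hzero
      calc ‖g (u,0)‖ * ‖(-z * (1 + (c:ℂ) * π.integ z (sA u)) + ((0:ℝ):ℂ) / (1 + 0))⁻¹
            - (-z * (1 + (c:ℂ) * ρ.integ z (sA u)) + ((0:ℝ):ℂ) / (1 + 0))⁻¹‖
          ≤ ‖g‖ * ((2*z.im*‖(c:ℂ) * π.integ z (sA u) - (c:ℂ) * ρ.integ z (sA u)‖
              + 4*M*‖(0:ℂ) - 0‖) * (4/z.im^2)) :=
            mul_le_mul (g.norm_coe_le_norm _) hd (norm_nonneg _) (norm_nonneg _)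
        _ ≤ ‖g‖ * ((2*z.im*a + 4*M*0) * (4/z.im^2)) := by
            gcongr
            · exact hvva u (le_trans hc.le hu.1) hu.2
            · rw [sub_zero, norm_zero]
        _ = ‖g‖ * ((2*z.im*a) * (4/z.im^2)) := by ring
    exact combo_bound hcC h1mc hI hJ
  -- deduce a = 0 and b = 0
  have ha1 : a ≤ σmax2 * ((2*z.im*b + 4*M*a) * (4/z.im^2)) := by
    apply csSup_le hAne
    rintro r ⟨u, hu, rfl⟩
    calc ‖π.integ z (sA u) - ρ.integ z (sA u)‖
        ≤ ‖sA u‖ * ((2*z.im*b + 4*M*a) * (4/z.im^2)) := hkey1 (sA u)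
      _ ≤ σmax2 * ((2*z.im*b + 4*M*a) * (4/z.im^2)) := by
          apply mul_le_mul_of_nonneg_right (hsAn u) (by positivity)
  have hb1 : b ≤ σmax2 * ((2*z.im*a + 4*M*b) * (4/z.im^2))
      + σmax2 * ((2*z.im*a) * (4/z.im^2)) := by
    apply csSup_le hBne
    rintro r ⟨u, hu, rfl⟩
    calc ‖πt.integ z (sL u) - ρt.integ z (sL u)‖
        ≤ ‖sL u‖ * ((2*z.im*a + 4*M*b) * (4/z.im^2))
          + ‖sL u‖ * ((2*z.im*a) * (4/z.im^2)) := hkey2 (sL u)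
      _ ≤ σmax2 * ((2*z.im*a + 4*M*b) * (4/z.im^2))
          + σmax2 * ((2*z.im*a) * (4/z.im^2)) := by
          apply add_le_add
          · exact mul_le_mul_of_nonneg_right (hsLn u) (by positivity)
          · exact mul_le_mul_of_nonneg_right (hsLn u) (by positivity)
  have hy2 : (0:ℝ) < z.im^2 := by positivity
  have hcancel : (4 / z.im^2) * z.im^2 = 4 := by field_simp
  have ha2 : a * z.im^2 ≤ σmax2 * (8*z.im*b + 16*M*a) := by
    have h := mul_le_mul_of_nonneg_right ha1 hy2.le
    calc a * z.im^2 ≤ (σmax2 * ((2*z.im*b + 4*M*a) * (4/z.im^2))) * z.im^2 := h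
      _ = σmax2 * (2*z.im*b + 4*M*a) * ((4/z.im^2) * z.im^2) := by ring
      _ = σmax2 * (2*z.im*b + 4*M*a) * 4 := by rw [hcancel]
      _ = σmax2 * (8*z.im*b + 16*M*a) := by ring
  have hb2 : b * z.im^2 ≤ σmax2 * (8*z.im*a + 16*M*b) + σmax2 * (8*z.im*a) := by
    have h := mul_le_mul_of_nonneg_right hb1 hy2.le
    calc b * z.im^2 ≤ (σmax2 * ((2*z.im*a + 4*M*b) * (4/z.im^2))
          + σmax2 * ((2*z.im*a) * (4/z.im^2))) * z.im^2 := h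
      _ = (σmax2 * (2*z.im*a + 4*M*b) + σmax2 * (2*z.im*a)) * ((4/z.im^2) * z.im^2) := by ring
      _ = (σmax2 * (2*z.im*a + 4*M*b) + σmax2 * (2*z.im*a)) * 4 := by rw [hcancel]
      _ = σmax2 * (8*z.im*a + 16*M*b) + σmax2 * (8*z.im*a) := by ring
  have h64K : 64 * σmax2 < z.im := by nlinarith
  have hMK : 16 * σmax2 * M ≤ z.im^2 / 2 := by nlinarith
  have s1 : a * z.im ≤ 16 * σmax2 * b := by
    nlinarith [mul_le_mul_of_nonneg_left hMK ha0, ha2, hy0]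
  have s2 : b * z.im ≤ 32 * σmax2 * a := by
    nlinarith [mul_le_mul_of_nonneg_left hMK hb0, hb2, hy0]
  have haz : a = 0 := by
    apply le_antisymm _ ha0
    nlinarith [mul_le_mul_of_nonneg_right s1 hy0.le,
      mul_le_mul_of_nonneg_left s2 (by positivity : (0:ℝ) ≤ 16*σmax2),
      mul_pos (show (0:ℝ) < z.im - 64*σmax2 by linarith)
        (show (0:ℝ) < z.im + 64*σmax2 by nlinarith),
      ha0, hb0, hK0, mul_nonneg (mul_nonneg hK0 hK0) ha0]
  have hbz : b = 0 := by
    apply le_antisymm _ hb0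
    rw [haz] at s2
    nlinarith [s2, hy0, hb0]
  intro g
  constructor
  · have h := hkey1 g
    rw [haz, hbz] at h
    have h0 : ‖π.integ z g - ρ.integ z g‖ ≤ 0 := by
      calc ‖π.integ z g - ρ.integ z g‖ ≤ ‖g‖ * ((2*z.im*0 + 4*M*0) * (4/z.im^2)) := h
        _ = 0 := by ring
    exact sub_eq_zero.mp (norm_le_zero_iff.mp h0)
  · have h := hkey2 g
    rw [haz, hbz] at h
    have h0 : ‖πt.integ z g - ρt.integ z g‖ ≤ 0 := by
      calc ‖πt.integ z g - ρt.integ z g‖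
          ≤ ‖g‖ * ((2*z.im*0 + 4*M*0) * (4/z.im^2)) + ‖g‖ * ((2*z.im*0) * (4/z.im^2)) := h
        _ = 0 := by ring
    exact sub_eq_zero.mp (norm_le_zero_iff.mp h0)
end

section
/- Let (f_p) be a sequence of analytic functions on ℂ⁺ with |f_p(z)| ≤ C/Im(z) for all p and all z ∈ ℂ⁺. Suppose f_p(z) converges as p → ∞ for every z in the region {z ∈ ℂ⁺ : |Re(z)| ≤ Im(z), Im(z) > T} for some T > 0. Then f_p converges pointwise on all of ℂ⁺ to an analytic function f, uniformly on compact subsets of ℂ⁺. -/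
/-!
Fix `z₀` in the upper half-plane, with `y = Im z₀`, and take a disc centred at a point `s i` far
up the imaginary axis which contains `z₀` but stays at height `≥ y / 4`, so that the bound
`C / Im z` makes the `f_p` uniformly bounded on it. The circle of radius `s / 4` about `s i` lies in
the cone where the `f_p` converge, so by dominated convergence in the Cauchy integral the Taylor
coefficients of `f_p` at `s i` converge. The Cauchy estimates on the big disc bound them
geometrically, and Tannery's theorem gives uniform convergence on a neighbourhood of `z₀`.
Locally uniform convergence then gives uniform convergence on compacts, and the limit is
holomorphic by Weierstrass' theorem.
-/

open Complex Filter Metric Topology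

theorem exists_tendstoLocallyUniformlyOn_of_forall_exists_nhds {ι α β : Type*}
    [TopologicalSpace α] [UniformSpace β] [T2Space β] [Nonempty β] {F : ι → α → β}
    {l : Filter ι} [l.NeBot] {s : Set α}
    (h : ∀ x ∈ s, ∃ G : α → β, ∃ t ∈ 𝓝[s] x, TendstoUniformlyOn F G l t) :
    ∃ g, TendstoLocallyUniformlyOn F g l s := by
  refine ⟨fun x => limUnder l (F · x), tendstoLocallyUniformlyOn_of_forall_exists_nhds
    fun x hx => ?_⟩
  obtain ⟨G, t, ht, hG⟩ := h x hx
  exact ⟨t, ht, hG.congr_right fun y hy => (hG.tendsto_at hy).limUnder_eq.symm⟩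

theorem Complex.im_sub_le_im_of_mem_closedBall {c w : ℂ} {R : ℝ} (hw : w ∈ closedBall c R) :
    c.im - R ≤ w.im := by
  have h := (abs_le.1 ((abs_im_le_norm (w - c)).trans (mem_closedBall_iff_norm.1 hw))).1
  rw [sub_im] at h
  linarith

theorem Complex.abs_re_le_im_of_mem_sphere_mul_I {s : ℝ} {w : ℂ} (hs : 0 ≤ s)
    (hw : w ∈ sphere (s * I) (s / 4)) : |w.re| ≤ w.im ∧ 3 * s / 4 ≤ w.im := by
  have hnorm : ‖w - s * I‖ = s / 4 := mem_sphere_iff_norm.1 hw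
  have hre : |w.re| ≤ s / 4 := by simpa [hnorm] using abs_re_le_norm (w - s * I)
  have him : 3 * s / 4 ≤ w.im := by
    have := (abs_le.1 (hnorm ▸ abs_im_le_norm (w - s * I))).1
    simp only [sub_im, mul_im, ofReal_re, I_im, ofReal_im, I_re, mul_zero, mul_one] at this
    linarith
  exact ⟨hre.trans (by linarith), him⟩

theorem Complex.mem_ball_mul_I_of_sq_norm_le {z : ℂ} {s : ℝ} (hz : 0 < z.im)
    (hs : ‖z‖ ^ 2 ≤ s * z.im) : z ∈ ball (s * I) (s - z.im / 2) := by
  have hzs : z.im ≤ s := by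
    nlinarith [pow_le_pow_left₀ hz.le (im_le_norm z) 2]
  rw [mem_ball_iff_norm]
  refine lt_of_pow_lt_pow_left₀ 2 (by linarith) ?_
  have hsq : ‖z - s * I‖ ^ 2 = ‖z‖ ^ 2 - 2 * s * z.im + s ^ 2 := by
    simp only [Complex.sq_norm, normSq_apply, sub_re, sub_im, mul_re, mul_im, ofReal_re,
      ofReal_im, I_re, I_im]
    ring
  nlinarith

section

variable {ι E : Type*} [NormedAddCommGroup E] [NormedSpace ℂ E]

theorem circleIntegral.tendsto_integral_of_dominated_convergence {l : Filter ι}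
    [l.IsCountablyGenerated] {F : ι → ℂ → E} {f : ℂ → E} {c : ℂ} {R M : ℝ}
    (hF : ∀ᶠ p in l, CircleIntegrable (F p) c R)
    (hbound : ∀ᶠ p in l, ∀ z ∈ sphere c |R|, ‖F p z‖ ≤ M)
    (hlim : ∀ z ∈ sphere c |R|, Tendsto (F · z) l (𝓝 (f z))) :
    Tendsto (fun p => ∮ z in C(c, R), F p z) l (𝓝 (∮ z in C(c, R), f z)) := by
  refine intervalIntegral.tendsto_integral_filter_of_dominated_convergence (fun _ => |R| * M)
    (hF.mono fun p hp => hp.out.def'.1) ?_ intervalIntegrable_const ?_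
  · filter_upwards [hbound] with p hp
    refine Eventually.of_forall fun θ _ => ?_
    rw [norm_smul, deriv_circleMap, norm_mul, norm_circleMap_zero, Complex.norm_I, mul_one]
    exact mul_le_mul_of_nonneg_left (hp _ (circleMap_mem_sphere' c R θ)) (abs_nonneg R)
  · exact Eventually.of_forall fun θ _ =>
      (hlim _ (circleMap_mem_sphere' c R θ)).const_smul _

theorem cauchyPowerSeries_coeff (f : ℂ → E) (c : ℂ) (R : ℝ) (n : ℕ) :
    (cauchyPowerSeries f c R).coeff n =
      (2 * Real.pi * I : ℂ)⁻¹ • ∮ z in C(c, R), (z - c)⁻¹ ^ n • (z - c)⁻¹ • f z := by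
  simp [cauchyPowerSeries, FormalMultilinearSeries.coeff]

theorem norm_cauchyPowerSeries_coeff_le {f : ℂ → E} {c : ℂ} {R M : ℝ} (hR : 0 < R)
    (hf : ∀ z ∈ sphere c R, ‖f z‖ ≤ M) (n : ℕ) :
    ‖(cauchyPowerSeries f c R).coeff n‖ ≤ M / R ^ n := by
  have hint : ‖∮ z in C(c, R), (z - c)⁻¹ ^ n • (z - c)⁻¹ • f z‖ ≤
      2 * Real.pi * R * (R⁻¹ ^ n * (R⁻¹ * M)) := by
    refine circleIntegral.norm_integral_le_of_norm_le_const hR.le fun z hz => ?_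
    have hzc : ‖z - c‖ = R := by rwa [mem_sphere_iff_norm] at hz
    rw [norm_smul, norm_smul, norm_pow, norm_inv, hzc]
    gcongr
    exact hf z hz
  rw [cauchyPowerSeries_coeff, norm_smul]
  calc ‖(2 * Real.pi * I : ℂ)⁻¹‖ * ‖∮ z in C(c, R), (z - c)⁻¹ ^ n • (z - c)⁻¹ • f z‖
      ≤ (2 * Real.pi)⁻¹ * (2 * Real.pi * R * (R⁻¹ ^ n * (R⁻¹ * M))) := by
        have h2πI : ‖(2 * Real.pi * I : ℂ)⁻¹‖ = (2 * Real.pi)⁻¹ := by simp [Real.pi_pos.le]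
        rw [h2πI]
        gcongr
    _ = M / R ^ n := by rw [inv_pow]; field_simp

theorem tendsto_cauchyPowerSeries_coeff {l : Filter ι} [l.IsCountablyGenerated]
    {F : ι → ℂ → E} {f : ℂ → E} {c : ℂ} {R M : ℝ} (hR : 0 < R)
    (hF : ∀ p, ContinuousOn (F p) (sphere c R)) (hbound : ∀ p, ∀ z ∈ sphere c R, ‖F p z‖ ≤ M)
    (hlim : ∀ z ∈ sphere c R, Tendsto (F · z) l (𝓝 (f z))) (n : ℕ) :
    Tendsto (fun p => (cauchyPowerSeries (F p) c R).coeff n) l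
      (𝓝 ((cauchyPowerSeries f c R).coeff n)) := by
  simp only [cauchyPowerSeries_coeff]
  refine (circleIntegral.tendsto_integral_of_dominated_convergence (M := R⁻¹ ^ n * (R⁻¹ * M))
    ?_ ?_ ?_).const_smul _
  · refine Eventually.of_forall fun p => ContinuousOn.circleIntegrable hR.le ?_
    have hinv : ContinuousOn (fun z => (z - c)⁻¹) (sphere c R) :=
      (continuousOn_id.sub continuousOn_const).inv₀ fun z hz =>
        sub_ne_zero.2 (ne_of_mem_sphere hz hR.ne')
    exact (hinv.pow n).smul (hinv.smul (hF p))
  · refine Eventually.of_forall fun p z hz => ?_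
    rw [abs_of_pos hR] at hz
    have hzc : ‖z - c‖ = R := by rwa [mem_sphere_iff_norm] at hz
    rw [norm_smul, norm_smul, norm_pow, norm_inv, hzc]
    gcongr
    exact hbound p z hz
  · rw [abs_of_pos hR]
    exact fun z hz => ((hlim z hz).const_smul _).const_smul _

theorem tendstoUniformlyOn_of_hasSum_of_tendsto_coeff [CompleteSpace E] {l : Filter ι}
    [l.NeBot] {F : ι → ℂ → E} {a : ι → ℕ → E} {b : ℕ → E} {u : ℕ → ℝ} {c : ℂ} {ρ : ℝ}
    (hρ : 0 ≤ ρ) (hF : ∀ p, ∀ z ∈ closedBall c ρ, HasSum (fun n => (z - c) ^ n • a p n) (F p z))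
    (ha : ∀ n, Tendsto (a · n) l (𝓝 (b n))) (hu : Summable u)
    (hau : ∀ p n, ‖a p n‖ * ρ ^ n ≤ u n) :
    TendstoUniformlyOn F (fun z => ∑' n, (z - c) ^ n • b n) l (closedBall c ρ) := by
  have hbu : ∀ n, ‖b n‖ * ρ ^ n ≤ u n := fun n =>
    le_of_tendsto ((ha n).norm.mul_const _) (Eventually.of_forall fun p => hau p n)
  have hdiff : ∀ p n, ‖‖a p n - b n‖ * ρ ^ n‖ ≤ 2 * u n := fun p n => by
    rw [Real.norm_of_nonneg (by positivity)]
    nlinarith [norm_sub_le (a p n) (b n), hau p n, hbu n, pow_nonneg hρ n]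
  have hsum : ∀ p, Summable fun n => ‖a p n - b n‖ * ρ ^ n := fun p =>
    (hu.mul_left 2).of_norm_bounded (hdiff p)
  have hlim : Tendsto (fun p => ∑' n, ‖a p n - b n‖ * ρ ^ n) l (𝓝 0) := by
    simpa using tendsto_tsum_of_dominated_convergence (hu.mul_left 2)
      (fun n => ((ha n).sub_const (b n)).norm.mul_const (ρ ^ n)) (Eventually.of_forall hdiff)
  rw [Metric.tendstoUniformlyOn_iff]
  intro ε hε
  filter_upwards [hlim.eventually (gt_mem_nhds hε)] with p hp z hz
  have hzc : ∀ n, ‖z - c‖ ^ n ≤ ρ ^ n := fun n =>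
    pow_le_pow_left₀ (norm_nonneg _) (mem_closedBall_iff_norm.1 hz) n
  have hb : HasSum (fun n => (z - c) ^ n • b n) (∑' n, (z - c) ^ n • b n) := by
    refine (hu.of_norm_bounded fun n => ?_).hasSum
    rw [norm_smul, norm_pow, mul_comm]
    exact (mul_le_mul_of_nonneg_left (hzc n) (norm_nonneg _)).trans (hbu n)
  rw [dist_eq_norm]
  refine lt_of_le_of_lt ((hb.sub (hF p z hz)).norm_le_of_bounded (hsum p).hasSum fun n => ?_) hp
  rw [← smul_sub, norm_smul, norm_pow, norm_sub_rev (b n), mul_comm]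
  exact mul_le_mul_of_nonneg_left (hzc n) (norm_nonneg _)

theorem tendstoUniformlyOn_closedBall_of_tendsto_on_sphere [CompleteSpace E] {l : Filter ι}
    [l.NeBot] [l.IsCountablyGenerated] {F : ι → ℂ → E} {f : ℂ → E} {c : ℂ} {r R ρ M : ℝ}
    (hr : 0 < r) (hrR : r < R) (hρ : 0 ≤ ρ) (hρR : ρ < R)
    (hF : ∀ p, DifferentiableOn ℂ (F p) (closedBall c R))
    (hM : ∀ p, ∀ z ∈ closedBall c R, ‖F p z‖ ≤ M)
    (hlim : ∀ z ∈ sphere c r, Tendsto (F · z) l (𝓝 (f z))) :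
    TendstoUniformlyOn F (fun z => ∑' n, (z - c) ^ n • (cauchyPowerSeries f c r).coeff n) l
      (closedBall c ρ) := by
  have hR : 0 < R := hr.trans hrR
  let Rn : NNReal := ⟨R, hR.le⟩
  have hps : ∀ p, HasFPowerSeriesOnBall (F p) (cauchyPowerSeries (F p) c R) c Rn :=
    fun p => (hF p).hasFPowerSeriesOnBall (R := Rn) hR
  have hcoeff : ∀ p, cauchyPowerSeries (F p) c R = cauchyPowerSeries (F p) c r := fun p =>
    (hps p).hasFPowerSeriesAt.eq_formalMultilinearSeries
      (((hF p).mono (closedBall_subset_closedBall hrR.le)).hasFPowerSeriesOnBall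
        (R := ⟨r, hr.le⟩) hr).hasFPowerSeriesAt
  refine tendstoUniformlyOn_of_hasSum_of_tendsto_coeff
    (a := fun p => (cauchyPowerSeries (F p) c R).coeff) (u := fun n => M * (ρ / R) ^ n) hρ
    (fun p z hz => ?_) (fun n => ?_)
    ((summable_geometric_of_lt_one (by positivity) ((div_lt_one hR).2 hρR)).mul_left M)
    (fun p n => ?_)
  · have hzR : z - c ∈ eball (0 : ℂ) Rn := by
      rw [mem_eball, edist_zero_right, enorm_eq_nnnorm, ENNReal.coe_lt_coe, ← NNReal.coe_lt_coe]
      exact (mem_closedBall_iff_norm.1 hz).trans_lt hρR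
    simpa only [FormalMultilinearSeries.apply_eq_pow_smul_coeff, add_sub_cancel] using
      (hps p).hasSum hzR
  · simp only [hcoeff]
    exact tendsto_cauchyPowerSeries_coeff hr
      (fun p => ((hF p).mono (sphere_subset_closedBall.trans
        (closedBall_subset_closedBall hrR.le))).continuousOn)
      (fun p z hz => hM p z (closedBall_subset_closedBall hrR.le (sphere_subset_closedBall hz)))
      hlim n
  · calc ‖(cauchyPowerSeries (F p) c R).coeff n‖ * ρ ^ n ≤ M / R ^ n * ρ ^ n := by
          gcongr
          exact norm_cauchyPowerSeries_coeff_le hR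
            (fun z hz => hM p z (sphere_subset_closedBall hz)) n
      _ = M * (ρ / R) ^ n := by rw [div_pow]; ring

theorem exists_nhds_tendstoUniformlyOn_of_tendsto_on_cone [CompleteSpace E] {l : Filter ι}
    [l.NeBot] [l.IsCountablyGenerated] {F : ι → ℂ → E} {f : ℂ → E} {C T : ℝ}
    (hF : ∀ p, DifferentiableOn ℂ (F p) {z : ℂ | 0 < z.im})
    (hbd : ∀ p, ∀ z : ℂ, 0 < z.im → ‖F p z‖ ≤ C / z.im)
    (hlim : ∀ z : ℂ, |z.re| ≤ z.im → T < z.im → Tendsto (F · z) l (𝓝 (f z)))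
    {z₀ : ℂ} (hz₀ : 0 < z₀.im) :
    ∃ G : ℂ → E, ∃ t ∈ 𝓝 z₀, TendstoUniformlyOn F G l t := by
  set y := z₀.im
  -- large enough that `z₀ ∈ ball (s * I) (s - y / 2)` and `sphere (s * I) (s / 4)` lies in the cone
  set s := ‖z₀‖ ^ 2 / y + 2 * |T| with hs_def
  have hy : y ≤ ‖z₀‖ ^ 2 / y := by
    rw [le_div_iff₀ hz₀, ← sq]
    exact pow_le_pow_left₀ hz₀.le (im_le_norm z₀) 2
  have hys : y ≤ s := by linarith [abs_nonneg T]
  have hsT : T < 3 * s / 4 := by linarith [le_abs_self T]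
  have hz₀s : ‖z₀‖ ^ 2 ≤ s * y := by
    rw [hs_def, add_mul, div_mul_cancel₀ _ hz₀.ne']
    nlinarith [abs_nonneg T]
  have him : ∀ w ∈ closedBall (s * I) (s - y / 4), y / 4 ≤ w.im := fun w hw => by
    have := im_sub_le_im_of_mem_closedBall hw
    simp only [mul_im, ofReal_re, I_im, ofReal_im, I_re, mul_zero, mul_one, add_zero] at this
    linarith
  have hpos : closedBall (s * I) (s - y / 4) ⊆ {z : ℂ | 0 < z.im} := fun w hw =>
    (by positivity : 0 < y / 4).trans_le (him w hw)
  have hM : ∀ p, ∀ w ∈ closedBall (s * I) (s - y / 4), ‖F p w‖ ≤ |C| / (y / 4) :=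
    fun p w hw => calc
      ‖F p w‖ ≤ C / w.im := hbd p w (hpos hw)
      _ ≤ |C| / w.im := div_le_div_of_nonneg_right (le_abs_self C) (hpos hw).le
      _ ≤ |C| / (y / 4) := by gcongr; exact him w hw
  have hcone : ∀ w ∈ sphere (s * I) (s / 4), Tendsto (F · w) l (𝓝 (f w)) := fun w hw => by
    obtain ⟨hre, hw_im⟩ := abs_re_le_im_of_mem_sphere_mul_I (by linarith) hw
    exact hlim w hre (hsT.trans_le hw_im)
  have hrR : s / 4 < s - y / 4 := by linarith
  exact ⟨_, _, isOpen_ball.mem_nhds (mem_ball_mul_I_of_sq_norm_le hz₀ hz₀s),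
    (tendstoUniformlyOn_closedBall_of_tendsto_on_sphere (by linarith) hrR (by linarith)
      (by linarith) (fun p => (hF p).mono hpos) hM hcone).mono ball_subset_closedBall⟩

end

theorem stmt_15_general (f : ℕ → ℂ → ℂ) (C T : ℝ)
    (han : ∀ p, DifferentiableOn ℂ (f p) {z : ℂ | 0 < z.im})
    (hbd : ∀ p, ∀ z : ℂ, 0 < z.im → ‖f p z‖ ≤ C / z.im)
    (hconv : ∀ z : ℂ, |z.re| ≤ z.im → T < z.im → ∃ l : ℂ, Tendsto (fun p => f p z) atTop (nhds l)) :
    ∃ g : ℂ → ℂ, DifferentiableOn ℂ g {z : ℂ | 0 < z.im}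
      ∧ (∀ z : ℂ, 0 < z.im → Tendsto (fun p => f p z) atTop (nhds (g z)))
      ∧ ∀ K : Set ℂ, K ⊆ {z : ℂ | 0 < z.im} → IsCompact K →
          TendstoUniformlyOn (fun p => f p) g atTop K := by
  have hopen : IsOpen {z : ℂ | 0 < z.im} := isOpen_lt continuous_const continuous_im
  have hcone : ∀ z : ℂ, |z.re| ≤ z.im → T < z.im →
      Tendsto (f · z) atTop (𝓝 (limUnder atTop (f · z))) :=
    fun z hre him => tendsto_nhds_limUnder (hconv z hre him)
  obtain ⟨g, hg⟩ := exists_tendstoLocallyUniformlyOn_of_forall_exists_nhds fun z hz => by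
    obtain ⟨G, t, ht, hG⟩ := exists_nhds_tendstoUniformlyOn_of_tendsto_on_cone han hbd hcone hz
    exact ⟨G, t, mem_nhdsWithin_of_mem_nhds ht, hG⟩
  exact ⟨g, hg.differentiableOn (Eventually.of_forall han) hopen, fun z hz => hg.tendsto_at hz,
    (tendstoLocallyUniformlyOn_iff_forall_isCompact hopen).1 hg⟩

/-- Normal family argument: if `(f_p)` are analytic on ℂ⁺ with the uniform bound
`|f_p(z)| ≤ C/Im z`, and converge pointwise on the region `{|Re z| ≤ Im z, Im z > T}`,
then they converge pointwise on all of ℂ⁺ to an analytic function, uniformly on every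
compact subset of ℂ⁺. -/
theorem stmt_15 (f : ℕ → ℂ → ℂ) (C T : ℝ) (hT : 0 < T)
    (han : ∀ p, DifferentiableOn ℂ (f p) {z : ℂ | 0 < z.im})
    (hbd : ∀ p, ∀ z : ℂ, 0 < z.im → ‖f p z‖ ≤ C / z.im)
    (hconv : ∀ z : ℂ, |z.re| ≤ z.im → T < z.im → ∃ l : ℂ, Tendsto (fun p => f p z) atTop (nhds l)) :
    ∃ g : ℂ → ℂ, DifferentiableOn ℂ g {z : ℂ | 0 < z.im}
      ∧ (∀ z : ℂ, 0 < z.im → Tendsto (fun p => f p z) atTop (nhds (g z)))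
      ∧ ∀ K : Set ℂ, K ⊆ {z : ℂ | 0 < z.im} → IsCompact K →
          TendstoUniformlyOn (fun p => f p) g atTop K :=
  stmt_15_general f C T han hbd hconv
end
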